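/- arXiv:2307.05757 — 9 statements merged into one kernel-verified Lean document; each statement's English description precedes it below -/
import Mathlib

section
/- For every integer $t \ge 2$, setting $r = 2^t - 1$, there exists an $r$-uniform $r$-partite $2^{t-1}$-regular hypergraph with exactly two vertices in each of the $r$ parts that admits no $(t-1)$-shallow hitting edge set. Concretely, the hypergraph with vertex set $\mathbb{F}_2^{t+1} \setminus \{0, x_0\}$ (where $x_0 = (1,0,\dots,0)^T$), with edges $\{x : a^T x = 0, x \ne 0\}$ for those $a \ne 0$ with $a^T x_0 \ne 0$, and with parts $\{x, x + x_0\}$, has these properties. -/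
/-!
Over `𝔽₂` the edge `edge a = a^⊥ \ {0}` determines `a`, so a set `M` of edges is a set `A` of
normals with `a ⬝ᵥ x₀ = 1`, and the degree of a vertex `v` in `M` is the number of `a ∈ A` with
`a ⬝ᵥ v = 0`. Edge sizes and degrees are obtained by halving: translation by a vector `u` with
`u ⬝ᵥ v = 1` exchanges the solutions of `a ⬝ᵥ v = 0` and `a ⬝ᵥ v = 1`.

If `A` hits every vertex, no nonzero `w` is orthogonal to all of `A`: for `w ≠ x₀` the vertex
`w + x₀` lies on some `a^⊥`, whence `a ⬝ᵥ w = a ⬝ᵥ x₀ ≠ 0`. Hence `A` has at least `t` elements.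
But any `t` of them have a common nonzero orthogonal vector `w` in `𝔽₂^{t+1}`; it is not `x₀`, so
it is a vertex of degree at least `t`, and `A` is not `(t-1)`-shallow.
-/

open Finset

section DotProduct

variable {K : Type*} [Field K] {n : ℕ}

theorem exists_ne_zero_forall_dotProduct_eq_zero (S : Finset (Fin n → K)) (hS : #S < n) :
    ∃ w ≠ 0, ∀ a ∈ S, a ⬝ᵥ w = 0 := by
  let f := Matrix.mulVecLin (Matrix.of fun (a : S) => (a : Fin n → K))
  have hker : LinearMap.ker f ≠ ⊥ := LinearMap.ker_ne_bot_of_finrank_lt (by simpa using hS)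
  obtain ⟨w, hw, hw0⟩ := Submodule.exists_mem_ne_zero_of_ne_bot hker
  exact ⟨w, hw0, fun a ha => congrFun hw ⟨a, ha⟩⟩

theorem exists_dotProduct_eq_zero_and_ne_zero {x₀ v : Fin n → K}
    (hv : v ∉ Submodule.span K {x₀}) : ∃ u, u ⬝ᵥ x₀ = 0 ∧ u ⬝ᵥ v ≠ 0 := by
  obtain ⟨f, hfv, hf⟩ := Submodule.exists_dual_map_eq_bot_of_notMem hv inferInstance
  have hdot (x) : (dotProductEquiv K (Fin n)).symm f ⬝ᵥ x = f x := by
    rw [← dotProductEquiv_apply_apply, LinearEquiv.apply_symm_apply]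
  refine ⟨_, ?_, by rwa [hdot]⟩
  rw [hdot, ← Submodule.mem_bot K, ← hf]
  exact Submodule.mem_map_of_mem (Submodule.mem_span_singleton_self x₀)

end DotProduct

theorem two_mul_card_filter_of_add_swaps {G : Type*} [AddGroup G] {s : Finset G} {u : G}
    (hu : u + u = 0) (hs : ∀ x ∈ s, x + u ∈ s) (p : G → Prop) [DecidablePred p]
    (hp : ∀ x, p (x + u) ↔ ¬ p x) :
    2 * #(s.filter p) = #s := by
  have hinv (x : G) : x + u + u = x := by rw [add_assoc, hu, add_zero]
  have hswap : #(s.filter p) = #(s.filter fun x => ¬ p x) :=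
    card_nbij' (· + u) (· + u)
      (fun x hx => by
        simp only [coe_filter, Set.mem_ofPred_eq] at hx ⊢
        exact ⟨hs x hx.1, fun h => (hp x).mp h hx.2⟩)
      (fun x hx => by
        simp only [coe_filter, Set.mem_ofPred_eq] at hx ⊢
        exact ⟨hs x hx.1, (hp x).mpr hx.2⟩)
      (fun x _ => hinv x) (fun x _ => hinv x)
  rw [two_mul]
  nth_rw 2 [hswap]
  exact card_filter_add_card_filter_not p

section ZModTwo

variable {n : ℕ}

theorem two_mul_card_filter_dotProduct_eq {s : Finset (Fin n → ZMod 2)} {u v : Fin n → ZMod 2}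
    (hs : ∀ a ∈ s, a + u ∈ s) (huv : u ⬝ᵥ v = 1) (c : ZMod 2) :
    2 * #(s.filter fun a => a ⬝ᵥ v = c) = #s :=
  two_mul_card_filter_of_add_swaps (G := Fin n → ZMod 2)
    (funext fun i => CharTwo.add_self_eq_zero (u i)) hs _ fun a => by
    rw [add_dotProduct, huv]
    generalize a ⬝ᵥ v = x
    revert x c
    decide

theorem two_mul_card_filter_dotProduct_eq_univ {v : Fin n → ZMod 2} (hv : v ≠ 0) (c : ZMod 2) :
    2 * #(univ.filter fun a : Fin n → ZMod 2 => a ⬝ᵥ v = c) = 2 ^ n := by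
  obtain ⟨i, hi⟩ := Function.ne_iff.mp hv
  have hsingle : Pi.single i 1 ⬝ᵥ v = 1 := by
    rw [single_dotProduct, one_mul]
    exact Fin.eq_one_of_ne_zero _ hi
  rw [two_mul_card_filter_dotProduct_eq (fun a _ => mem_univ _) hsingle c, card_univ]
  simp

end ZModTwo

namespace TruncatedProjectiveSpace

variable {t : ℕ} {x₀ a v x : Fin (t + 1) → ZMod 2}

def vertices (x₀ : Fin (t + 1) → ZMod 2) : Finset (Fin (t + 1) → ZMod 2) :=
  univ.filter fun x => x ≠ 0 ∧ x ≠ x₀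

def edge (a : Fin (t + 1) → ZMod 2) : Finset (Fin (t + 1) → ZMod 2) :=
  univ.filter fun x => x ≠ 0 ∧ a ⬝ᵥ x = 0

def normals (x₀ : Fin (t + 1) → ZMod 2) : Finset (Fin (t + 1) → ZMod 2) :=
  univ.filter fun a => a ≠ 0 ∧ a ⬝ᵥ x₀ ≠ 0

def edges (x₀ : Fin (t + 1) → ZMod 2) : Finset (Finset (Fin (t + 1) → ZMod 2)) :=
  (normals x₀).image edge

theorem mem_vertices : x ∈ vertices x₀ ↔ x ≠ 0 ∧ x ≠ x₀ := by simp [vertices]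

theorem mem_edge : x ∈ edge a ↔ x ≠ 0 ∧ a ⬝ᵥ x = 0 := by simp [edge]

theorem mem_normals : a ∈ normals x₀ ↔ a ⬝ᵥ x₀ = 1 := by
  refine ⟨fun h => Fin.eq_one_of_ne_zero _ (mem_filter.mp h).2.2, fun h => mem_filter.mpr ?_⟩
  refine ⟨mem_univ a, ?_, h ▸ one_ne_zero⟩
  rintro rfl
  simp at h

theorem card_vertices (hx₀ : x₀ ≠ 0) : #(vertices x₀) = 2 * (2 ^ t - 1) := by
  have hv : vertices x₀ = (univ.erase 0).erase x₀ := by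
    ext x
    simp [mem_vertices, and_comm]
  rw [hv, card_erase_of_mem (by simpa using hx₀), card_erase_of_mem (mem_univ 0), card_univ]
  simp only [Fintype.card_pi, ZMod.card, prod_const, card_univ, Fintype.card_fin, pow_succ]
  have := Nat.one_le_two_pow (n := t)
  omega

theorem add_mem_vertices (hx : x ∈ vertices x₀) : x + x₀ ∈ vertices x₀ := by
  rw [mem_vertices] at hx ⊢
  exact ⟨fun h => hx.2 (CharTwo.add_eq_zero.mp h), add_ne_right.mpr hx.1⟩

theorem card_edge (ha : a ≠ 0) : #(edge a) = 2 ^ t - 1 := by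
  have he : edge a = (univ.filter fun x => x ⬝ᵥ a = 0).erase 0 := by
    ext x
    simp [mem_edge, dotProduct_comm a, and_comm]
  have hhalf := two_mul_card_filter_dotProduct_eq_univ ha 0
  rw [pow_succ] at hhalf
  rw [he, card_erase_of_mem (by simp)]
  omega

theorem edge_subset_vertices (ha : a ⬝ᵥ x₀ ≠ 0) : edge a ⊆ vertices x₀ := fun x hx => by
  rw [mem_edge] at hx
  exact mem_vertices.mpr ⟨hx.1, by rintro rfl; exact ha hx.2⟩

theorem card_edge_inter_pair_le_one (ha : a ⬝ᵥ x₀ ≠ 0) (x : Fin (t + 1) → ZMod 2) :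
    #(edge a ∩ {x, x + x₀}) ≤ 1 := by
  have hnot : ¬ (x ∈ edge a ∧ x + x₀ ∈ edge a) := by
    rintro ⟨hx, hxx₀⟩
    rw [mem_edge, dotProduct_add, (mem_edge.mp hx).2, zero_add] at hxx₀
    exact ha hxx₀.2
  rw [card_le_one]
  intro y hy z hz
  simp only [mem_inter, mem_insert, mem_singleton] at hy hz
  rcases hy with ⟨hy, rfl | rfl⟩ <;> rcases hz with ⟨hz, rfl | rfl⟩
  all_goals first | rfl | exact absurd ⟨‹_›, ‹_›⟩ hnot

theorem edge_injective : Function.Injective (edge (t := t)) := by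
  intro a b hab
  funext j
  have hj : (Pi.single j 1 : Fin (t + 1) → ZMod 2) ≠ 0 := by simp
  have hiff := congrArg (Pi.single j 1 ∈ ·) hab
  simp only [mem_edge, dotProduct_single, mul_one, ne_eq, hj, not_false_eq_true, true_and,
    eq_iff_iff] at hiff
  revert hiff
  generalize a j = p
  generalize b j = q
  revert p q
  decide

theorem card_filter_mem_image_edge (A : Finset (Fin (t + 1) → ZMod 2)) (hv : v ≠ 0) :
    #((A.image edge).filter (v ∈ ·)) = #(A.filter (· ⬝ᵥ v = 0)) := by
  rw [filter_image, card_image_of_injective _ edge_injective]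
  congr 1
  exact filter_congr fun a _ => by simp [mem_edge, hv]

theorem card_filter_mem_edges (hx₀ : x₀ ≠ 0) (hv : v ∈ vertices x₀) :
    #((edges x₀).filter (v ∈ ·)) = 2 ^ (t - 1) := by
  obtain ⟨hv₀, hvx₀⟩ := mem_vertices.mp hv
  have hspan : v ∉ Submodule.span (ZMod 2) {x₀} := by
    rw [Submodule.mem_span_singleton]
    rintro ⟨c, rfl⟩
    rcases (by decide : ∀ c : ZMod 2, c = 0 ∨ c = 1) c with rfl | rfl <;> simp_all
  obtain ⟨u, hux₀, huv⟩ := exists_dotProduct_eq_zero_and_ne_zero hspan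
  have hnormals : normals x₀ = univ.filter (· ⬝ᵥ x₀ = 1) := by
    ext a
    rw [mem_normals, mem_filter, and_iff_right (mem_univ a)]
  have hhalf := two_mul_card_filter_dotProduct_eq (s := normals x₀)
    (fun a ha => by rw [mem_normals, add_dotProduct, hux₀, add_zero, ← mem_normals]; exact ha)
    (Fin.eq_one_of_ne_zero _ huv) 0
  have hquarter := two_mul_card_filter_dotProduct_eq_univ hx₀ 1
  rw [← hnormals] at hquarter
  rw [edges, card_filter_mem_image_edge _ hv₀]
  rcases Nat.eq_zero_or_pos t with rfl | ht
  · omega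
  · have hpow : 2 ^ (t + 1) = 4 * 2 ^ (t - 1) := by
      rw [show t + 1 = t - 1 + 2 by omega, pow_add]
      ring
    omega

theorem exists_dotProduct_ne_zero_of_hitting (ht : 1 ≤ t) {A : Finset (Fin (t + 1) → ZMod 2)}
    (hA : ∀ a ∈ A, a ⬝ᵥ x₀ ≠ 0) (hhit : ∀ v ∈ vertices x₀, ∃ a ∈ A, a ⬝ᵥ v = 0)
    {w : Fin (t + 1) → ZMod 2} (hw : w ≠ 0) : ∃ a ∈ A, a ⬝ᵥ w ≠ 0 := by
  by_cases hwx₀ : w = x₀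
  · subst hwx₀
    obtain ⟨v, hv⟩ : (vertices w).Nonempty := by
      rw [← card_pos, card_vertices hw]
      have := Nat.one_lt_two_pow (n := t) (by omega)
      omega
    obtain ⟨a, ha, -⟩ := hhit v hv
    exact ⟨a, ha, hA a ha⟩
  · obtain ⟨a, ha, hav⟩ := hhit _ (add_mem_vertices (mem_vertices.mpr ⟨hw, hwx₀⟩))
    refine ⟨a, ha, fun haw => hA a ha ?_⟩
    rwa [dotProduct_add, haw, zero_add] at hav

theorem not_shallow_hitting (ht : 1 ≤ t) {A : Finset (Fin (t + 1) → ZMod 2)}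
    (hA : ∀ a ∈ A, a ⬝ᵥ x₀ ≠ 0) :
    ¬ ∀ v ∈ vertices x₀, 1 ≤ #(A.filter (· ⬝ᵥ v = 0)) ∧ #(A.filter (· ⬝ᵥ v = 0)) ≤ t - 1 := by
  intro hdeg
  have hhit : ∀ v ∈ vertices x₀, ∃ a ∈ A, a ⬝ᵥ v = 0 := fun v hv =>
    filter_nonempty_iff.mp (card_pos.mp (hdeg v hv).1)
  have hcard : t ≤ #A := by
    by_contra! hlt
    obtain ⟨w, hw, hAw⟩ := exists_ne_zero_forall_dotProduct_eq_zero A (by omega)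
    obtain ⟨a, ha, haw⟩ := exists_dotProduct_ne_zero_of_hitting ht hA hhit hw
    exact haw (hAw a ha)
  obtain ⟨S, hSA, hS⟩ := exists_subset_card_eq hcard
  obtain ⟨w, hw, hSw⟩ := exists_ne_zero_forall_dotProduct_eq_zero S (by omega)
  obtain ⟨a, ha⟩ : S.Nonempty := card_pos.mp (by omega)
  have hwv : w ∈ vertices x₀ :=
    mem_vertices.mpr ⟨hw, by rintro rfl; exact hA a (hSA ha) (hSw a ha)⟩
  have hSw' : S ⊆ A.filter (· ⬝ᵥ w = 0) := fun b hb => mem_filter.mpr ⟨hSA hb, hSw b hb⟩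
  have := card_le_card hSw'
  have := (hdeg w hwv).2
  omega

theorem not_exists_shallow_hitting (ht : 1 ≤ t) :
    ¬ ∃ M ⊆ edges x₀, ∀ v ∈ vertices x₀,
      1 ≤ #(M.filter (v ∈ ·)) ∧ #(M.filter (v ∈ ·)) ≤ t - 1 := by
  rintro ⟨M, hM, hdeg⟩
  obtain ⟨A, hA, rfl⟩ := subset_image_iff.mp hM
  refine not_shallow_hitting ht (fun a ha => (mem_filter.mp (hA ha)).2.2) fun v hv => ?_
  rw [← card_filter_mem_image_edge A (mem_vertices.mp hv).1]
  exact hdeg v hv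

end TruncatedProjectiveSpace

open TruncatedProjectiveSpace in
/-- The truncated projective-space hypergraph: vertices `𝔽₂^{t+1} \ {0, x₀}` with
`x₀ = (1,0,…,0)`, edges `{x ≠ 0 : aᵀx = 0}` for nonzero `a` with `aᵀx₀ ≠ 0`, and parts
`{x, x+x₀}`. It is `(2^t-1)`-uniform, `(2^t-1)`-partite with two vertices per part,
`2^(t-1)`-regular, and admits no `(t-1)`-shallow hitting edge set. -/
theorem truncated_projective_space (t : ℕ) (ht : 2 ≤ t) :
    let x0 : Fin (t+1) → ZMod 2 := fun i => if i = 0 then 1 else 0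
    let Vset : Finset (Fin (t+1) → ZMod 2) := Finset.univ.filter fun x => x ≠ 0 ∧ x ≠ x0
    let E : Finset (Finset (Fin (t+1) → ZMod 2)) :=
      (Finset.univ.filter fun a : Fin (t+1) → ZMod 2 => a ≠ 0 ∧ (∑ i, a i * x0 i) ≠ 0).image
        (fun a => Finset.univ.filter fun x => x ≠ 0 ∧ ∑ i, a i * x i = 0)
    -- there are 2·(2^t - 1) vertices, i.e. r = 2^t - 1 parts of size two
    (Vset.card = 2 * (2^t - 1)) ∧
    -- (2^t - 1)-uniform
    (∀ e ∈ E, e.card = 2^t - 1) ∧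
    (∀ e ∈ E, e ⊆ Vset) ∧
    -- the parts {x, x + x0} have two vertices and partition Vset
    (∀ x ∈ Vset, x + x0 ∈ Vset ∧ x + x0 ≠ x) ∧
    -- partite: each edge meets each part at most once
    (∀ e ∈ E, ∀ x ∈ Vset, (e ∩ {x, x + x0}).card ≤ 1) ∧
    -- 2^(t-1)-regular
    (∀ v ∈ Vset, (E.filter fun e => v ∈ e).card = 2^(t-1)) ∧
    -- no (t-1)-shallow hitting edge set
    ¬ ∃ M ⊆ E, ∀ v ∈ Vset,
        1 ≤ (M.filter fun e => v ∈ e).card ∧ (M.filter fun e => v ∈ e).card ≤ t - 1 := by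
  intro x0 Vset E
  have hx0 : x0 ≠ 0 := fun h => by simpa [x0] using congrFun h 0
  have hE : ∀ e ∈ E, ∃ a, a ⬝ᵥ x0 ≠ 0 ∧ a ≠ 0 ∧ edge a = e := fun e he => by
    obtain ⟨a, ha, rfl⟩ := mem_image.mp he
    exact ⟨a, (mem_filter.mp ha).2.2, (mem_filter.mp ha).2.1, rfl⟩
  refine ⟨card_vertices hx0, fun e he => ?_, fun e he => ?_,
    fun x hx => ⟨add_mem_vertices hx, add_ne_left.mpr hx0⟩, fun e he x _ => ?_,
    fun v hv => card_filter_mem_edges hx0 hv, not_exists_shallow_hitting (by omega)⟩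
  all_goals obtain ⟨a, hax0, ha, rfl⟩ := hE e he
  · exact card_edge ha
  · exact edge_subset_vertices hax0
  · exact card_edge_inter_pair_le_one hax0 x
end

section
/- Let $r \ge 2$, $t \ge 2$, and $n$ be positive integers, and let $k = (r-1)t + 1$. Then there exists an $r$-uniform hypergraph $H$ on $n$ vertices with minimum codegree $\delta_{r-1}(H) \ge n/k - 1$ that has no $t$-shallow hitting edge set. Concretely: partition the vertex set into $A$ with $|A| = \lceil n/k - 1 \rceil$ and $B$ with $|B| = n - |A|$, and take as edges all $r$-subsets meeting $A$; this hypergraph has no $t$-shallow hitting edge set. -/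
/-!
Take `A` of size `m = ⌈n/k⌉ - 1` and let the edges be all `r`-sets meeting `A`. An `(r-1)`-set
either meets `A`, and then every other vertex completes it to an edge, or it misses `A`, and then
every vertex of `A` does; either way its codegree is at least `m ≥ n/k - 1`. For a `t`-shallow
hitting edge set `M`, double counting vertex-edge incidences gives `|M| ≤ t|A|`, since every edge
meets `A`, and `n - |A| ≤ (r-1)|M|`, since every edge has at most `r - 1` vertices outside `A`.
Hence `n ≤ k|A|`, contradicting `k|A| < n`.
-/

open Finset

section

variable {α : Type*} [DecidableEq α]

theorem sum_card_filter_mem_eq_sum_card_filter (S : Finset α) (M : Finset (Finset α)) :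
    ∑ v ∈ S, #{e ∈ M | v ∈ e} = ∑ e ∈ M, #{v ∈ S | v ∈ e} :=
  sum_card_bipartiteAbove_eq_sum_card_bipartiteBelow (r := fun v e => v ∈ e)

theorem card_le_mul_card_of_forall_nonempty_inter {M : Finset (Finset α)} {A : Finset α} {t : ℕ}
    (hmeet : ∀ e ∈ M, (e ∩ A).Nonempty) (hdeg : ∀ v ∈ A, #{e ∈ M | v ∈ e} ≤ t) :
    #M ≤ t * #A := by
  have hpos : ∀ e ∈ M, 1 ≤ #{v ∈ A | v ∈ e} := fun e he => by
    simpa [card_pos, filter_mem_eq_inter, inter_comm] using hmeet e he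
  calc #M ≤ ∑ e ∈ M, #{v ∈ A | v ∈ e} := by simpa using card_nsmul_le_sum M _ 1 hpos
    _ = ∑ v ∈ A, #{e ∈ M | v ∈ e} := (sum_card_filter_mem_eq_sum_card_filter A M).symm
    _ ≤ t * #A := by simpa [mul_comm] using sum_le_card_nsmul A _ t hdeg

theorem card_le_mul_card_of_forall_card_sdiff_le {M : Finset (Finset α)} {A S : Finset α} {s : ℕ}
    (houtside : ∀ e ∈ M, #(e \ A) ≤ s) (hcover : ∀ v ∈ S \ A, 1 ≤ #{e ∈ M | v ∈ e}) :
    #(S \ A) ≤ s * #M := by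
  have hle : ∀ e ∈ M, #{v ∈ S \ A | v ∈ e} ≤ s := fun e he =>
    (card_le_card fun v => by simp +contextual).trans (houtside e he)
  calc #(S \ A) ≤ ∑ v ∈ S \ A, #{e ∈ M | v ∈ e} := by simpa using card_nsmul_le_sum _ _ 1 hcover
    _ = ∑ e ∈ M, #{v ∈ S \ A | v ∈ e} := sum_card_filter_mem_eq_sum_card_filter _ M
    _ ≤ s * #M := by simpa [mul_comm] using sum_le_card_nsmul M _ s hle

variable [Fintype α]

def edgesMeeting (A : Finset α) (r : ℕ) : Finset (Finset α) :=
  {e ∈ powersetCard r univ | (e ∩ A).Nonempty}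

theorem mem_edgesMeeting {A e : Finset α} {r : ℕ} :
    e ∈ edgesMeeting A r ↔ #e = r ∧ (e ∩ A).Nonempty := by
  simp [edgesMeeting, mem_powersetCard]

theorem card_le_card_filter_insert_mem_edgesMeeting {A s : Finset α} {r : ℕ} (hs : #s + 1 = r)
    (hA : #A + #s ≤ Fintype.card α) : #A ≤ #{v | insert v s ∈ edgesMeeting A r} := by
  by_cases hsA : (s ∩ A).Nonempty
  · calc #A ≤ #sᶜ := by rw [card_compl]; omega
      _ ≤ _ := card_le_card fun v hv => by
        rw [mem_compl] at hv
        simp only [mem_filter_univ, mem_edgesMeeting, card_insert_of_notMem hv, hs, true_and]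
        exact hsA.mono (inter_subset_inter_right (subset_insert v s))
  · refine card_le_card fun v hv => ?_
    have hvs : v ∉ s := fun hvs => hsA ⟨v, mem_inter.2 ⟨hvs, hv⟩⟩
    simp only [mem_filter_univ, mem_edgesMeeting, card_insert_of_notMem hvs, hs, true_and]
    exact ⟨v, mem_inter.2 ⟨mem_insert_self v s, hv⟩⟩

theorem card_le_of_shallow_hitting_subset_edgesMeeting {A : Finset α} {r t : ℕ}
    {M : Finset (Finset α)} (hM : M ⊆ edgesMeeting A r)
    (hdeg : ∀ v, 1 ≤ #{e ∈ M | v ∈ e} ∧ #{e ∈ M | v ∈ e} ≤ t) :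
    Fintype.card α ≤ ((r - 1) * t + 1) * #A := by
  have hedge : ∀ e ∈ M, #e = r ∧ (e ∩ A).Nonempty := fun e he => mem_edgesMeeting.1 (hM he)
  have houtside : ∀ e ∈ M, #(e \ A) ≤ r - 1 := fun e he => by
    have := card_sdiff_add_card_inter e A
    have := (hedge e he).1
    have := (hedge e he).2.card_pos
    omega
  have hM_le : #M ≤ t * #A :=
    card_le_mul_card_of_forall_nonempty_inter (fun e he => (hedge e he).2) fun v _ => (hdeg v).2
  have hcompl_le : #(univ \ A) ≤ (r - 1) * #M :=
    card_le_mul_card_of_forall_card_sdiff_le houtside fun v _ => (hdeg v).1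
  rw [card_univ_sdiff] at hcompl_le
  calc Fintype.card α ≤ (r - 1) * (t * #A) + #A := by
        have := Nat.mul_le_mul_left (r - 1) hM_le
        omega
    _ = ((r - 1) * t + 1) * #A := by ring

end

theorem pred_div_add_le {n r t : ℕ} (ht : 0 < t) (hr : r - 1 ≤ n) :
    (n - 1) / ((r - 1) * t + 1) + (r - 1) ≤ n := by
  set m := (n - 1) / ((r - 1) * t + 1)
  rcases m.eq_zero_or_pos with hm | hm
  · omega
  have hmul : ((r - 1) * t + 1) * m ≤ n - 1 := Nat.mul_div_le (n - 1) _
  have hr_le : r - 1 ≤ (r - 1) * (t * m) := Nat.le_mul_of_pos_right _ (Nat.mul_pos ht hm)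
  have : ((r - 1) * t + 1) * m = (r - 1) * (t * m) + m := by ring
  omega

theorem div_sub_one_le_cast_pred_div (n k : ℕ) : (n : ℚ) / k - 1 ≤ ((n - 1) / k : ℕ) := by
  rcases k.eq_zero_or_pos with rfl | hk
  · simp
  rw [sub_le_iff_le_add, div_le_iff₀ (by exact_mod_cast hk)]
  have : n ≤ k * ((n - 1) / k + 1) := by
    have := Nat.lt_mul_div_succ (n - 1) hk
    omega
  exact_mod_cast this.trans_eq (mul_comm _ _)

/-- For all `r ≥ 2`, `t ≥ 2`, `n ≥ 1` there is an `r`-uniform hypergraph on `n` vertices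
with minimum codegree `δ_{r-1} ≥ n/((r-1)t+1) - 1` and no `t`-shallow hitting edge set. -/
theorem exists_hypergraph_large_codegree_no_shallow_hitting
    (r t n : ℕ) (hr : 2 ≤ r) (ht : 2 ≤ t) (hn : 1 ≤ n) :
    ∃ E : Finset (Finset (Fin n)),
      -- r-uniform
      (∀ e ∈ E, e.card = r) ∧
      -- minimum codegree at least n/((r-1)t+1) - 1
      (∀ s : Finset (Fin n), s.card = r - 1 →
        (n : ℚ) / ((r-1)*t+1) - 1 ≤ ((Finset.univ.filter fun v => insert v s ∈ E).card : ℚ)) ∧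
      -- no t-shallow hitting edge set
      ¬ ∃ M ⊆ E, ∀ v : Fin n,
          1 ≤ (M.filter fun e => v ∈ e).card ∧ (M.filter fun e => v ∈ e).card ≤ t := by
  set k := (r - 1) * t + 1
  -- `(n - 1) / k = ⌈n / k⌉ - 1` for `n ≥ 1`
  set m := (n - 1) / k
  obtain ⟨A, -, hA⟩ := exists_subset_card_eq (s := (univ : Finset (Fin n))) (n := m)
    (by simpa using (Nat.div_le_self _ _).trans (Nat.sub_le n 1))
  refine ⟨edgesMeeting A r, fun e he => (mem_edgesMeeting.1 he).1, fun s hs => ?_, ?_⟩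
  · have hk : ((r : ℚ) - 1) * t + 1 = k := by
      push_cast [k, Nat.cast_sub (by omega : 1 ≤ r)]; ring
    have hAs : #A + #s ≤ Fintype.card (Fin n) := by
      have hs_le : r - 1 ≤ n := hs ▸ (card_le_univ s).trans_eq (Fintype.card_fin n)
      simpa [hA, hs] using pred_div_add_le (by omega) hs_le
    calc (n : ℚ) / ((r - 1) * t + 1) - 1 = n / k - 1 := by rw [hk]
      _ ≤ m := div_sub_one_le_cast_pred_div n k
      _ ≤ _ := by
        exact_mod_cast hA ▸ card_le_card_filter_insert_mem_edgesMeeting (by omega) hAs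
  · rintro ⟨M, hME, hM⟩
    have hcard : n ≤ k * m := by
      simpa only [Fintype.card_fin, hA] using card_le_of_shallow_hitting_subset_edgesMeeting hME hM
    have : k * m ≤ n - 1 := Nat.mul_div_le (n - 1) k
    omega
end

section
/- Let $H=(V,E)$ be an $r$-uniform hypergraph on $n$ vertices with $\delta_{r-1}(H) \ge n/k$ where $k = (r-1)t+1$ and $t \ge 2$. Let $M \subseteq E$ be a $t$-shallow edge set such that every edge of $M$ contains at most one vertex of $M$-degree at least $2$, minimizing the number $n_0(M)$ of uncovered vertices among all such sets. If $n_0(M) > 0$, then the number of vertices of $M$-degree exactly $t$ is strictly less than $\lceil n/k \rceil$. -/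
/-! Every vertex `v` of degree `t ≥ 2` in `M` is the only vertex of degree `≥ 2` on each of
its `t` edges, so the `(r-1)t` other vertices of those edges have degree exactly `1` and are
private to `v`. Hence the uncovered vertices, the vertices of degree `t` and their private
neighbours are disjoint, giving `n₀ + n_t ((r-1)t + 1) ≤ n`, i.e. `n_t k < n` as soon as
`n₀ > 0`. -/

open Finset

namespace Hypergraph

variable {V : Type*} [DecidableEq V]

def degree (M : Finset (Finset V)) (v : V) : ℕ := (M.filter fun e => v ∈ e).card

def AtMostOneHeavy (M : Finset (Finset V)) : Prop :=
  ∀ e ∈ M, (e.filter fun v => 2 ≤ degree M v).card ≤ 1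

def neighbors (M : Finset (Finset V)) (v : V) : Finset V :=
  (M.filter fun e => v ∈ e).biUnion fun e => e.erase v

variable {M : Finset (Finset V)}

theorem one_le_degree {e : Finset V} {v : V} (he : e ∈ M) (hv : v ∈ e) : 1 ≤ degree M v :=
  card_pos.mpr ⟨e, mem_filter.mpr ⟨he, hv⟩⟩

theorem one_lt_degree {e e' : Finset V} {v : V} (he : e ∈ M) (he' : e' ∈ M) (hne : e ≠ e')
    (hv : v ∈ e) (hv' : v ∈ e') : 1 < degree M v :=
  one_lt_card.mpr ⟨e, mem_filter.mpr ⟨he, hv⟩, e', mem_filter.mpr ⟨he', hv'⟩, hne⟩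

theorem AtMostOneHeavy.degree_le_one (hM : AtMostOneHeavy M) {e : Finset V} (he : e ∈ M)
    {v w : V} (hv : v ∈ e) (hw : w ∈ e) (hvw : v ≠ w) (hv2 : 2 ≤ degree M v) :
    degree M w ≤ 1 := by
  by_contra! hw2
  have : 1 < (e.filter fun u => 2 ≤ degree M u).card :=
    one_lt_card.mpr ⟨v, mem_filter.mpr ⟨hv, hv2⟩, w, mem_filter.mpr ⟨hw, hw2⟩, hvw⟩
  exact absurd (hM e he) (by omega)

theorem mem_neighbors {v w : V} :
    w ∈ neighbors M v ↔ ∃ e ∈ M, v ∈ e ∧ w ≠ v ∧ w ∈ e := by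
  simp only [neighbors, mem_biUnion, mem_filter, mem_erase, and_assoc]

theorem AtMostOneHeavy.degree_eq_one_of_mem_neighbors (hM : AtMostOneHeavy M) {v w : V}
    (hv2 : 2 ≤ degree M v) (hw : w ∈ neighbors M v) : degree M w = 1 := by
  obtain ⟨e, he, hve, hwv, hwe⟩ := mem_neighbors.mp hw
  have := hM.degree_le_one he hve hwe hwv.symm hv2
  have := one_le_degree he hwe
  omega

theorem AtMostOneHeavy.card_neighbors {r : ℕ} (hM : AtMostOneHeavy M)
    (hunif : ∀ e ∈ M, e.card = r) {v : V} (hv2 : 2 ≤ degree M v) :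
    (neighbors M v).card = (r - 1) * degree M v := by
  have hpair : ((M.filter fun e => v ∈ e) : Set (Finset V)).PairwiseDisjoint
      fun e => e.erase v := by
    intro e he e' he' hne
    rw [Function.onFun, disjoint_left]
    intro w hw hw'
    have hwv : w ∈ neighbors M v := mem_biUnion.mpr ⟨e, he, hw⟩
    have := hM.degree_eq_one_of_mem_neighbors hv2 hwv
    have := one_lt_degree (mem_filter.mp he).1 (mem_filter.mp he').1 hne
      (mem_erase.mp hw).2 (mem_erase.mp hw').2
    omega
  rw [neighbors, card_biUnion hpair, sum_congr rfl fun e he => ?_, sum_const, smul_eq_mul,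
    mul_comm, degree]
  obtain ⟨he, hve⟩ := mem_filter.mp he
  rw [card_erase_of_mem hve, hunif e he]

theorem AtMostOneHeavy.disjoint_neighbors (hM : AtMostOneHeavy M) {v v' : V}
    (hv2 : 2 ≤ degree M v) (hv2' : 2 ≤ degree M v') (hne : v ≠ v') :
    Disjoint (neighbors M v) (neighbors M v') := by
  rw [disjoint_left]
  intro w hw hw'
  have hw1 := hM.degree_eq_one_of_mem_neighbors hv2 hw
  obtain ⟨e, he, hve, -, hwe⟩ := mem_neighbors.mp hw
  obtain ⟨e', he', hve', -, hwe'⟩ := mem_neighbors.mp hw'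
  obtain rfl : e = e' := by
    by_contra hee'
    have := one_lt_degree he he' hee' hwe hwe'
    omega
  have := hM.degree_le_one he hve hve' hne hv2
  omega

theorem AtMostOneHeavy.card_uncovered_add_card_degree_eq_mul_le [Fintype V] {r t : ℕ}
    (hM : AtMostOneHeavy M) (hunif : ∀ e ∈ M, e.card = r) (ht : 2 ≤ t) :
    (univ.filter fun v => degree M v = 0).card +
        (univ.filter fun v => degree M v = t).card * ((r - 1) * t + 1) ≤ Fintype.card V := by
  set N₀ := univ.filter fun v => degree M v = 0
  set T := univ.filter fun v => degree M v = t
  have hT2 : ∀ v ∈ T, 2 ≤ degree M v := fun v hv => (mem_filter.mp hv).2 ▸ ht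
  set U := T.biUnion (neighbors M)
  have hU1 : ∀ w ∈ U, degree M w = 1 := by
    intro w hw
    obtain ⟨v, hv, hwv⟩ := mem_biUnion.mp hw
    exact hM.degree_eq_one_of_mem_neighbors (hT2 v hv) hwv
  have hUcard : U.card = T.card * ((r - 1) * t) := by
    rw [card_biUnion fun v hv v' hv' hne => hM.disjoint_neighbors (hT2 v hv) (hT2 v' hv') hne,
      sum_congr rfl fun v hv => (hM.card_neighbors hunif (hT2 v hv)).trans
        (by rw [(mem_filter.mp hv).2]),
      sum_const, smul_eq_mul]
  have hN₀T : Disjoint N₀ T := disjoint_filter.mpr fun v _ h0 ht' => by omega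
  have hN₀TU : Disjoint (N₀ ∪ T) U := by
    rw [disjoint_left]
    intro w hw hwU
    have := hU1 w hwU
    rcases mem_union.mp hw with h | h <;> have := (mem_filter.mp h).2 <;> omega
  have := card_le_univ (N₀ ∪ T ∪ U)
  rw [card_union_of_disjoint hN₀TU, card_union_of_disjoint hN₀T, hUcard] at this
  linarith

end Hypergraph

open Hypergraph in
theorem degree_t_vertices_lt_ceil_general
    {V : Type*} [Fintype V] [DecidableEq V] (r t k : ℕ) (ht : 2 ≤ t)
    (hk : k = (r-1)*t+1)
    (E : Finset (Finset V)) (hunif : ∀ e ∈ E, e.card = r)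
    (M : Finset (Finset V)) (hM : M ⊆ E)
    (hstruct : ∀ e ∈ M,
      (e.filter fun v => 2 ≤ (M.filter fun e' => v ∈ e').card).card ≤ 1)
    (hn0 : 0 < (Finset.univ.filter fun v : V => (M.filter fun e => v ∈ e).card = 0).card) :
    ((Finset.univ.filter fun v : V => (M.filter fun e => v ∈ e).card = t).card : ℤ)
      < ⌈(Fintype.card V : ℚ) / k⌉ := by
  have hcount := AtMostOneHeavy.card_uncovered_add_card_degree_eq_mul_le hstruct
    (fun e he => hunif e (hM he)) ht
  rw [← hk] at hcount
  have hlt : (univ.filter fun v => degree M v = t).card * k < Fintype.card V := by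
    unfold degree at hcount ⊢
    omega
  have hk0 : (0 : ℚ) < k := by rw [hk]; positivity
  rw [Int.lt_ceil, Int.cast_natCast, lt_div_iff₀ hk0]
  exact_mod_cast hlt

/-- Claim 1 of Theorem 4.4: if `H` is `r`-uniform on `n` vertices with
`δ_{r-1}(H) ≥ n/k` where `k = (r-1)t+1`, and `M ⊆ E` is a `t`-shallow edge set such that
every edge of `M` contains at most one vertex of `M`-degree `≥ 2`, minimizing the number
of uncovered vertices among all such sets, then `n₀(M) > 0` implies that the number of
vertices of `M`-degree exactly `t` is less than `⌈n/k⌉`. -/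
theorem degree_t_vertices_lt_ceil
    {V : Type*} [Fintype V] [DecidableEq V] (r t k : ℕ) (hr : 2 ≤ r) (ht : 2 ≤ t)
    (hk : k = (r-1)*t+1)
    (E : Finset (Finset V)) (hunif : ∀ e ∈ E, e.card = r)
    (hdeg : ∀ s : Finset V, s.card = r - 1 →
      (Fintype.card V : ℚ) / k ≤ ((Finset.univ.filter fun v => insert v s ∈ E).card : ℚ))
    (M : Finset (Finset V)) (hM : M ⊆ E)
    (hshallow : ∀ v : V, (M.filter fun e => v ∈ e).card ≤ t)
    (hstruct : ∀ e ∈ M,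
      (e.filter fun v => 2 ≤ (M.filter fun e' => v ∈ e').card).card ≤ 1)
    (hmin : ∀ M' ⊆ E, (∀ v : V, (M'.filter fun e => v ∈ e).card ≤ t) →
      (∀ e ∈ M', (e.filter fun v => 2 ≤ (M'.filter fun e' => v ∈ e').card).card ≤ 1) →
      (Finset.univ.filter fun v : V => (M.filter fun e => v ∈ e).card = 0).card ≤
        (Finset.univ.filter fun v : V => (M'.filter fun e => v ∈ e).card = 0).card)
    (hn0 : 0 < (Finset.univ.filter fun v : V => (M.filter fun e => v ∈ e).card = 0).card) :
    ((Finset.univ.filter fun v : V => (M.filter fun e => v ∈ e).card = t).card : ℤ)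
      < ⌈(Fintype.card V : ℚ) / k⌉ :=
  degree_t_vertices_lt_ceil_general r t k ht hk E hunif M hM hstruct hn0
end

section
/- Let $G = (A \,\dot\cup\, B, E)$ be a bipartite graph with $|A| \le |B| \le t|A|$ for a positive integer $t$. Let $\delta_A$ (resp. $\delta_B$) be the minimum degree over vertices of $A$ (resp. $B$). If $t\delta_A + \delta_B \ge |A|$ and $\delta_A + t\delta_B \ge |B|$, then every $X \subseteq A$ and every $X \subseteq B$ satisfies $|X| \le t|N(X)|$, where $N(X)$ denotes the set of neighbors of $X$. -/
/-- Let `G` be a finite bipartite graph with parts `A`, `B`, `|A| ≤ |B| ≤ t|A|`,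
whose minimum degrees `δ_A` over `A` and `δ_B` over `B` satisfy `tδ_A + δ_B ≥ |A|` and
`δ_A + tδ_B ≥ |B|`. Then every `X ⊆ A` and every `X ⊆ B` satisfies `|X| ≤ t|N(X)|`. -/
theorem bipartite_hall_type_condition
    {V : Type*} [Fintype V] [DecidableEq V] (G : SimpleGraph V) [DecidableRel G.Adj]
    (A B : Finset V) (hdisj : Disjoint A B) (hcov : A ∪ B = Finset.univ)
    (hbip : ∀ u v : V, G.Adj u v → (u ∈ A ∧ v ∈ B) ∨ (u ∈ B ∧ v ∈ A))
    (t : ℕ) (ht : 1 ≤ t) (hAB : A.card ≤ B.card) (hBA : B.card ≤ t * A.card)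
    (δA δB : ℕ)
    (hδA : ∀ a ∈ A, δA ≤ G.degree a) (hδB : ∀ b ∈ B, δB ≤ G.degree b)
    (h1 : A.card ≤ t * δA + δB) (h2 : B.card ≤ δA + t * δB) :
    ∀ X : Finset V, (X ⊆ A ∨ X ⊆ B) →
      X.card ≤ t * (X.biUnion (fun x => G.neighborFinset x)).card := by
  intro X hX
  rcases X.eq_empty_or_nonempty with rfl | ⟨x, hx⟩
  · simp
  set N := X.biUnion (fun y => G.neighborFinset y) with hNdef
  have hmemN : ∀ v w : V, v ∈ X → G.Adj v w → w ∈ N := by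
    intro v w hv hvw
    exact Finset.mem_biUnion.2 ⟨v, hv, (SimpleGraph.mem_neighborFinset _ _ _).2 hvw⟩
  cases hX with
  | inl hXA =>
    have hδN : δA ≤ N.card := by
      refine le_trans (hδA x (hXA hx)) (Finset.card_le_card ?_)
      intro w hw
      exact hmemN x w hx ((SimpleGraph.mem_neighborFinset _ _ _).1 hw)
    by_cases hBN : B ⊆ N
    · calc X.card ≤ A.card := Finset.card_le_card hXA
        _ ≤ B.card := hAB
        _ ≤ N.card := Finset.card_le_card hBN
        _ ≤ t * N.card := Nat.le_mul_of_pos_left _ ht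
    · obtain ⟨b, hbB, hbN⟩ := Finset.not_subset.1 hBN
      have hbA : b ∉ A := Finset.disjoint_right.1 hdisj hbB
      have hsub : G.neighborFinset b ⊆ A \ X := by
        intro v hv
        have hadj : G.Adj b v := (SimpleGraph.mem_neighborFinset _ _ _).1 hv
        rcases hbip b v hadj with ⟨hbA', _⟩ | ⟨_, hvA⟩
        · exact absurd hbA' hbA
        · exact Finset.mem_sdiff.2 ⟨hvA, fun hvX => hbN (hmemN v b hvX hadj.symm)⟩
      have hd : δB ≤ A.card - X.card := by
        calc δB ≤ G.degree b := hδB b hbB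
          _ ≤ (A \ X).card := Finset.card_le_card hsub
          _ = A.card - X.card := Finset.card_sdiff_of_subset hXA
      have hXcard : X.card ≤ A.card := Finset.card_le_card hXA
      have : X.card ≤ t * δA := by omega
      calc X.card ≤ t * δA := this
        _ ≤ t * N.card := Nat.mul_le_mul_left t hδN
  | inr hXB =>
    have hδN : δB ≤ N.card := by
      refine le_trans (hδB x (hXB hx)) (Finset.card_le_card ?_)
      intro w hw
      exact hmemN x w hx ((SimpleGraph.mem_neighborFinset _ _ _).1 hw)
    by_cases hAN : A ⊆ N
    · calc X.card ≤ B.card := Finset.card_le_card hXB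
        _ ≤ t * A.card := hBA
        _ ≤ t * N.card := Nat.mul_le_mul_left t (Finset.card_le_card hAN)
    · obtain ⟨a, haA, haN⟩ := Finset.not_subset.1 hAN
      have haB : a ∉ B := Finset.disjoint_left.1 hdisj haA
      have hsub : G.neighborFinset a ⊆ B \ X := by
        intro v hv
        have hadj : G.Adj a v := (SimpleGraph.mem_neighborFinset _ _ _).1 hv
        rcases hbip a v hadj with ⟨_, hvB⟩ | ⟨haB', _⟩
        · exact Finset.mem_sdiff.2 ⟨hvB, fun hvX => haN (hmemN v a hvX hadj.symm)⟩
        · exact absurd haB' haB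
      have hd : δA ≤ B.card - X.card := by
        calc δA ≤ G.degree a := hδA a haA
          _ ≤ (B \ X).card := Finset.card_le_card hsub
          _ = B.card - X.card := Finset.card_sdiff_of_subset hXB
      have hXcard : X.card ≤ B.card := Finset.card_le_card hXB
      have : X.card ≤ t * δB := by omega
      calc X.card ≤ t * δB := this
        _ ≤ t * N.card := Nat.mul_le_mul_left t hδN
end

section
/- For each positive integer $t$ and each integer $n$ with $t+1 \mid n-1$, there exists a bipartite graph $G = (A \dot\cup B, E)$ with $|A| = |B| = n$ and minimum degree $\delta(G) = (n-1)/(t+1) \ge n/(t+1) - 1$ that has no $t$-shallow hitting edge set. Concretely: split $A = A_1 \dot\cup A_2$ and $B = B_1 \dot\cup B_2$ with $|A_1| = |B_2| = (n-1)/(t+1)$ and $|A_2| = |B_1| = (nt+1)/(t+1)$, and join each vertex of $A_1$ to each vertex of $B_1$ and each vertex of $A_2$ to each vertex of $B_2$; then $t|N(B_1)| = t|A_1| < |B_1|$, so no $t$-shallow hitting edge set exists. -/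
/-!
The left block `A₁` (the first `m` left vertices) is joined exactly to the right block `B₁`
(the first `n - m = t m + 1` right vertices), and `A₂` to `B₂`. In a `t`-shallow hitting edge
set every vertex of `B₁` needs an edge, all these edges end in `A₁`, and `A₁` can absorb at most
`t m` of them: a Hall-type deficiency. Every vertex has degree `m` or `n - m ≥ m`.
-/

open Finset

def pairEdge {α β : Type*} [DecidableEq α] [DecidableEq β] (p : α × β) : Finset (α ⊕ β) :=
  {Sum.inl p.1, Sum.inr p.2}

theorem pairEdge_injective {α β : Type*} [DecidableEq α] [DecidableEq β] :
    Function.Injective (pairEdge : α × β → Finset (α ⊕ β)) := by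
  intro p q h
  have h₁ : Sum.inl p.1 ∈ pairEdge q := h ▸ by simp [pairEdge]
  have h₂ : Sum.inr p.2 ∈ pairEdge q := h ▸ by simp [pairEdge]
  simp only [pairEdge, mem_insert, mem_singleton, Sum.inl.injEq, Sum.inr.injEq, reduceCtorEq,
    or_false, false_or] at h₁ h₂
  exact Prod.ext h₁ h₂

theorem card_filter_inl_mem_image_pairEdge {α β : Type*} [DecidableEq α] [DecidableEq β]
    (s : Finset (α × β)) (a : α) :
    #((s.image pairEdge).filter (Sum.inl a ∈ ·)) = #(s.filter (·.1 = a)) := by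
  rw [filter_image, card_image_of_injective _ pairEdge_injective]
  exact congrArg card <| filter_congr fun p _ => by simp [pairEdge, eq_comm]

theorem card_filter_inr_mem_image_pairEdge {α β : Type*} [DecidableEq α] [DecidableEq β]
    (s : Finset (α × β)) (b : β) :
    #((s.image pairEdge).filter (Sum.inr b ∈ ·)) = #(s.filter (·.2 = b)) := by
  rw [filter_image, card_image_of_injective _ pairEdge_injective]
  exact congrArg card <| filter_congr fun p _ => by simp [pairEdge, eq_comm]

section Fibers

variable {α β : Type*} [Fintype α] [Fintype β] (Q : α × β → Prop) [DecidablePred Q]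

theorem card_filter_fst_eq_filter_univ [DecidableEq α] (a : α) :
    #((univ.filter Q).filter (·.1 = a)) = #(univ.filter fun b => Q (a, b)) :=
  card_nbij' Prod.snd (a, ·) (fun p hp => by grind) (fun b hb => by grind)
    (fun p hp => by grind) (fun b _ => rfl)

theorem card_filter_snd_eq_filter_univ [DecidableEq β] (b : β) :
    #((univ.filter Q).filter (·.2 = b)) = #(univ.filter fun a => Q (a, b)) :=
  card_nbij' Prod.fst (·, b) (fun p hp => by grind) (fun a ha => by grind)
    (fun p hp => by grind) (fun a _ => rfl)

end Fibers

theorem card_le_mul_card_of_neighbors_subset {α β : Type*} [DecidableEq α] [DecidableEq β]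
    {P : Finset (α × β)} {A : Finset α} {B : Finset β} {t : ℕ}
    (hcover : ∀ b ∈ B, ∃ p ∈ P, p.2 = b) (hcap : ∀ a ∈ A, #(P.filter (·.1 = a)) ≤ t)
    (hnbhd : ∀ p ∈ P, p.2 ∈ B → p.1 ∈ A) :
    #B ≤ t * #A :=
  calc #B ≤ #(P.filter (·.2 ∈ B)) :=
        card_le_card_of_surjOn Prod.snd fun b hb => by
          obtain ⟨p, hp, rfl⟩ := hcover b hb
          exact ⟨p, mem_filter.2 ⟨hp, hb⟩, rfl⟩
    _ ≤ #(P.filter (·.1 ∈ A)) := card_le_card fun p hp => by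
          rw [mem_filter] at hp ⊢
          exact ⟨hp.1, hnbhd p hp.1 hp.2⟩
    _ ≤ t * #A := card_le_mul_card_image_of_maps_to (fun p hp => (mem_filter.1 hp).2) t
          fun a ha => (card_le_card (filter_subset_filter _ (filter_subset _ _))).trans (hcap a ha)

theorem Fin.card_filter_le_val {n k : ℕ} (hk : k ≤ n) : #{i : Fin n | k ≤ i.val} = n - k := by
  have := card_filter_add_card_filter_not (s := (univ : Finset (Fin n))) (· < k)
  simp only [Fin.card_filter_val_lt, not_lt, card_univ, Fintype.card_fin] at this
  omega

def IsShallowHittingSet {V : Type*} [DecidableEq V] (t : ℕ) (M : Finset (Finset V)) : Prop :=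
  ∀ v : V, 1 ≤ #(M.filter (v ∈ ·)) ∧ #(M.filter (v ∈ ·)) ≤ t

def twoBlockEdges (n m k : ℕ) : Finset (Finset (Fin n ⊕ Fin n)) :=
  ((univ : Finset (Fin n × Fin n)).filter fun p =>
    (p.1.val < m ∧ p.2.val < k) ∨ (m ≤ p.1.val ∧ k ≤ p.2.val)).image pairEdge

section TwoBlockEdges

variable {n m k : ℕ}

theorem card_filter_inl_mem_twoBlockEdges (hk : k ≤ n) (a : Fin n) :
    #((twoBlockEdges n m k).filter (Sum.inl a ∈ ·)) = if a.val < m then k else n - k := by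
  rw [twoBlockEdges, card_filter_inl_mem_image_pairEdge, card_filter_fst_eq_filter_univ]
  split_ifs with ha
  · simp [ha, not_le.2 ha, Fin.card_filter_val_lt, hk]
  · simp [ha, not_lt.1 ha, Fin.card_filter_le_val hk]

theorem card_filter_inr_mem_twoBlockEdges (hm : m ≤ n) (b : Fin n) :
    #((twoBlockEdges n m k).filter (Sum.inr b ∈ ·)) = if b.val < k then m else n - m := by
  rw [twoBlockEdges, card_filter_inr_mem_image_pairEdge, card_filter_snd_eq_filter_univ]
  split_ifs with hb
  · simp [hb, not_le.2 hb, Fin.card_filter_val_lt, hm]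
  · simp [hb, not_lt.1 hb, Fin.card_filter_le_val hm]

theorem not_exists_isShallowHittingSet_twoBlockEdges {t : ℕ} (hk : k ≤ n) (htm : t * m < k) :
    ¬ ∃ M ⊆ twoBlockEdges n m k, IsShallowHittingSet t M := by
  rintro ⟨M, hME, hM⟩
  obtain ⟨P, hP, rfl⟩ := subset_image_iff.1 hME
  have hB : #(univ.filter fun b : Fin n => b.val < k) = k := by
    rw [Fin.card_filter_val_lt, min_eq_right hk]
  have hA : #(univ.filter fun a : Fin n => a.val < m) ≤ m :=
    Fin.card_filter_val_lt ▸ min_le_right n m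
  have hdeficiency := card_le_mul_card_of_neighbors_subset (P := P) (t := t)
    (A := univ.filter fun a : Fin n => a.val < m) (B := univ.filter fun b : Fin n => b.val < k)
    (fun b _ => ?cover) (fun a _ => ?cap) (fun p hp hb => ?nbhd)
  case cover =>
    have := (hM (Sum.inr b)).1
    rw [card_filter_inr_mem_image_pairEdge] at this
    obtain ⟨p, hp⟩ := card_pos.1 this
    exact ⟨p, mem_filter.1 hp⟩
  case cap => exact card_filter_inl_mem_image_pairEdge P a ▸ (hM (Sum.inl a)).2
  case nbhd =>
    have := (mem_filter.1 (hP hp)).2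
    simp only [mem_filter, mem_univ, true_and] at hb ⊢
    omega
  have := Nat.mul_le_mul_left t hA
  omega

end TwoBlockEdges

/-- The tight example for bipartite graphs: for `t ≥ 1` and `(t+1) ∣ (n-1)`, the bipartite
graph on `Fin n ⊕ Fin n` joining `A₁` (the first `m := (n-1)/(t+1)` left vertices) completely
to `B₁` (the first `n - m` right vertices) and `A₂` to `B₂`, has minimum degree
`m = (n-1)/(t+1) ≥ n/(t+1) - 1` but no `t`-shallow hitting edge set. -/
theorem bipartite_min_degree_tight_example (t n : ℕ) (ht : 1 ≤ t) (hn : 1 ≤ n)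
    (hdvd : (t+1) ∣ (n-1)) :
    let m := (n-1)/(t+1)
    let E : Finset (Finset (Fin n ⊕ Fin n)) :=
      ((Finset.univ : Finset (Fin n × Fin n)).filter (fun p =>
          (p.1.val < m ∧ p.2.val < n - m) ∨ (m ≤ p.1.val ∧ n - m ≤ p.2.val))).image
        (fun p => {Sum.inl p.1, Sum.inr p.2})
    -- minimum degree is m = (n-1)/(t+1) ≥ n/(t+1) - 1
    ((n : ℚ)/(t+1) - 1 ≤ (m : ℚ)) ∧
    (∀ v : Fin n ⊕ Fin n, m ≤ (E.filter fun e => v ∈ e).card) ∧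
    (∃ v : Fin n ⊕ Fin n, (E.filter fun e => v ∈ e).card = m) ∧
    -- no t-shallow hitting edge set
    ¬ ∃ M ⊆ E, ∀ v : Fin n ⊕ Fin n,
        1 ≤ (M.filter fun e => v ∈ e).card ∧ (M.filter fun e => v ∈ e).card ≤ t := by
  intro m E
  have hm : m = (n - 1) / (t + 1) := rfl
  have hE : E = twoBlockEdges n m (n - m) := rfl
  clear_value E m
  subst hE
  have hn_eq : n = (t + 1) * m + 1 := by
    have := Nat.mul_div_cancel' hdvd
    rw [← hm] at this
    omega
  have hmt : m ≤ t * m := Nat.le_mul_of_pos_left m ht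
  have hnm : n - m = t * m + 1 := by rw [hn_eq, add_mul, one_mul]; omega
  refine ⟨?_, ?_, ?_, ?_⟩
  · rw [div_sub_one (by positivity), div_le_iff₀ (by positivity), hn_eq]
    push_cast
    nlinarith
  · rintro (a | b)
    · rw [card_filter_inl_mem_twoBlockEdges (by omega)]
      split_ifs <;> omega
    · rw [card_filter_inr_mem_twoBlockEdges (by omega)]
      split_ifs <;> omega
  · refine ⟨Sum.inr ⟨0, by omega⟩, ?_⟩
    rw [card_filter_inr_mem_twoBlockEdges (by omega), if_pos (by simp only; omega)]
  · apply not_exists_isShallowHittingSet_twoBlockEdges <;> omega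
end

section
/- Let $r \ge 2$, $t \ge 2$, and $n$ be positive integers and $k = (r-1)t+1$. There exists an $r$-uniform $r$-partite hypergraph $H$ with parts $V_1,\dots,V_r$ each of size $n$, with partite minimum codegree $\delta'_{r-1}(H) \ge n/k - 1$, that has no $t$-shallow hitting edge set. Concretely, choose $V_i' \subseteq V_i$ with $|V_i'| = \lceil n/k - 1 \rceil$, and let the edges be all legal $r$-sets $\{v_1,\dots,v_r\}$ ($v_i \in V_i$) with $v_i \in V_i'$ for at least one $i$. -/
open Finset


/-- For all `r ≥ 2`, `t ≥ 2`, `n ≥ 1` there is an `r`-uniform `r`-partite hypergraph with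
parts of size `n` (vertex set `Fin r × Fin n`, part `i` being `{i} × Fin n`) with partite
minimum codegree `δ'_{r-1} ≥ n/((r-1)t+1) - 1` and no `t`-shallow hitting edge set. -/
theorem exists_partite_hypergraph_large_codegree_no_shallow_hitting
    (r t n : ℕ) (hr : 2 ≤ r) (ht : 2 ≤ t) (hn : 1 ≤ n) :
    ∃ E : Finset (Finset (Fin r × Fin n)),
      -- each edge has exactly one vertex in each part (hence is r-uniform)
      (∀ e ∈ E, ∀ i : Fin r, (e.filter fun p => p.1 = i).card = 1) ∧
      -- partite minimum codegree at least n/((r-1)t+1) - 1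
      (∀ s : Finset (Fin r × Fin n), s.card = r - 1 →
        (∀ i : Fin r, (s.filter fun p => p.1 = i).card ≤ 1) →
        (n : ℚ) / ((r-1)*t+1) - 1 ≤ ((Finset.univ.filter fun v => insert v s ∈ E).card : ℚ)) ∧
      -- no t-shallow hitting edge set
      ¬ ∃ M ⊆ E, ∀ v : Fin r × Fin n,
          1 ≤ (M.filter fun e => v ∈ e).card ∧ (M.filter fun e => v ∈ e).card ≤ t := by
  classical
  obtain ⟨k, hkdef⟩ : ∃ k : ℕ, k = (r-1)*t+1 := ⟨_, rfl⟩
  obtain ⟨m, hmdef⟩ : ∃ m : ℕ, m = (n-1)/k := ⟨_, rfl⟩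
  have hk : 0 < k := by omega
  have hkm : k * m ≤ n - 1 := by rw [hmdef, mul_comm]; exact Nat.div_mul_le_self _ _
  have hmkm : m ≤ k * m := Nat.le_mul_of_pos_left m hk
  have hmn : m < n := by omega
  have hnkm : n ≤ k * (m + 1) := by
    have h1 := Nat.div_add_mod (n-1) k
    have h2 := Nat.mod_lt (n-1) hk
    have h3 : k * (m+1) = k * m + k := by ring
    have h4 : k * m = k * ((n-1)/k) := by rw [hmdef]
    omega
  -- the cardinality of the "prime" part of each class
  have hIio : ((univ : Finset (Fin n)).filter fun j : Fin n => (j : ℕ) < m).card = m := by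
    have e : ((univ : Finset (Fin n)).filter fun j : Fin n => (j : ℕ) < m)
        = Finset.Iio (⟨m, hmn⟩ : Fin n) := by
      ext j; simp [Fin.lt_def]
    rw [e, Fin.card_Iio]
  -- incidence double counting
  have hinc : ∀ (A : Finset (Fin r × Fin n)) (M : Finset (Finset (Fin r × Fin n))),
      ∑ v ∈ A, (M.filter fun e => v ∈ e).card = ∑ e ∈ M, (e ∩ A).card := by
    intro A M
    simp_rw [Finset.card_filter]
    rw [Finset.sum_comm]
    refine Finset.sum_congr rfl fun e _ => ?_
    rw [← Finset.card_filter, Finset.filter_mem_eq_inter, Finset.inter_comm]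
  refine ⟨Finset.univ.filter (fun e : Finset (Fin r × Fin n) =>
      (∀ i, (e.filter fun p => p.1 = i).card = 1) ∧ ∃ p ∈ e, (p.2 : ℕ) < m), ?_, ?_, ?_⟩
  · intro e he i
    simp only [Finset.mem_filter] at he
    exact he.2.1 i
  · -- codegree bound
    intro s hs hs1
    have hsum : ∑ i : Fin r, (s.filter fun p => p.1 = i).card = s.card :=
      (Finset.card_eq_sum_card_fiberwise (fun p _ => Finset.mem_univ p.1)).symm
    have hex : ∃ i0 : Fin r, (s.filter fun p => p.1 = i0).card = 0 := by
      by_contra h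
      push_neg at h
      have h1 : ∀ i : Fin r, 1 ≤ (s.filter fun p => p.1 = i).card := fun i =>
        Nat.one_le_iff_ne_zero.mpr (h i)
      have h2 : (r : ℕ) ≤ ∑ i : Fin r, (s.filter fun p => p.1 = i).card := by
        calc (r : ℕ) = ∑ _i : Fin r, 1 := by simp
        _ ≤ _ := Finset.sum_le_sum fun i _ => h1 i
      omega
    obtain ⟨i0, hi0⟩ := hex
    have hi0' : s.filter (fun p => p.1 = i0) = ∅ := Finset.card_eq_zero.mp hi0
    have hother : ∀ i, i ≠ i0 → (s.filter fun p => p.1 = i).card = 1 := by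
      intro i hi
      by_contra h
      have h0 : (s.filter fun p => p.1 = i).card = 0 := by have := hs1 i; omega
      have e2 : ∑ j ∈ (univ.erase i0).erase i, (s.filter fun p => p.1 = j).card
          + (s.filter fun p => p.1 = i).card = ∑ j ∈ univ.erase i0, (s.filter fun p => p.1 = j).card :=
        Finset.sum_erase_add _ _ (Finset.mem_erase.mpr ⟨hi, Finset.mem_univ i⟩)
      have e1 : ∑ j ∈ univ.erase i0, (s.filter fun p => p.1 = j).card
          + (s.filter fun p => p.1 = i0).card = ∑ j : Fin r, (s.filter fun p => p.1 = j).card :=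
        Finset.sum_erase_add _ _ (Finset.mem_univ i0)
      have hb : ∑ j ∈ (univ.erase i0).erase i, (s.filter fun p => p.1 = j).card
          ≤ ((univ.erase i0).erase i).card := by
        simpa using Finset.sum_le_card_nsmul _ _ 1 (fun x _ => hs1 x)
      have hc : ((univ.erase i0).erase i).card = r - 1 - 1 := by
        rw [Finset.card_erase_of_mem (Finset.mem_erase.mpr ⟨hi, Finset.mem_univ i⟩),
          Finset.card_erase_of_mem (Finset.mem_univ i0), Finset.card_univ, Fintype.card_fin]
      omega
    -- the m vertices of the prime set in part i0 all extend s to an edge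
    have hsub : (Finset.Iio (⟨m, hmn⟩ : Fin n)).image (fun j => ((i0, j) : Fin r × Fin n))
        ⊆ Finset.univ.filter fun v => insert v s ∈ Finset.univ.filter
          (fun e : Finset (Fin r × Fin n) =>
            (∀ i, (e.filter fun p => p.1 = i).card = 1) ∧ ∃ p ∈ e, (p.2 : ℕ) < m) := by
      intro v hv
      simp only [Finset.mem_image, Finset.mem_Iio] at hv
      obtain ⟨j, hj, rfl⟩ := hv
      have hjm : (j : ℕ) < m := hj
      simp only [Finset.mem_filter, Finset.mem_univ, true_and]
      constructor
      · intro i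
        by_cases hii : i = i0
        · subst hii
          rw [Finset.filter_insert]
          simp only [if_pos rfl, hi0']
          simp
        · rw [Finset.filter_insert]
          rw [if_neg (by simpa using Ne.symm hii)]
          exact hother i hii
      · exact ⟨(i0, j), Finset.mem_insert_self _ _, hjm⟩
    have hcard : m ≤ (Finset.univ.filter fun v => insert v s ∈ Finset.univ.filter
          (fun e : Finset (Fin r × Fin n) =>
            (∀ i, (e.filter fun p => p.1 = i).card = 1) ∧ ∃ p ∈ e, (p.2 : ℕ) < m)).card := by
      refine le_trans ?_ (Finset.card_le_card hsub)
      rw [Finset.card_image_of_injective _ (fun a b h => by simpa using h)]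
      rw [Fin.card_Iio]
    -- now the rational inequality
    have hkq : ((r : ℚ) - 1) * t + 1 = (k : ℚ) := by
      rw [hkdef]
      push_cast [Nat.cast_sub (by omega : 1 ≤ r)]
      ring
    rw [hkq]
    have hkq0 : (0 : ℚ) < (k : ℚ) := by exact_mod_cast hk
    rw [sub_le_iff_le_add, div_le_iff₀ hkq0]
    have h1 : (n : ℚ) ≤ ((m : ℚ) + 1) * k := by
      have h0 : ((n : ℕ) : ℚ) ≤ ((k * (m+1) : ℕ) : ℚ) := Nat.cast_le.mpr hnkm
      push_cast at h0
      linarith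
    have h2 : (m : ℚ) ≤ ((Finset.univ.filter fun v => insert v s ∈ Finset.univ.filter
          (fun e : Finset (Fin r × Fin n) =>
            (∀ i, (e.filter fun p => p.1 = i).card = 1) ∧ ∃ p ∈ e, (p.2 : ℕ) < m)).card : ℚ) := by
      exact_mod_cast hcard
    nlinarith [hkq0]
  · -- no t-shallow hitting edge set
    rintro ⟨M, hME, hM⟩
    set V' : Finset (Fin r × Fin n) := Finset.univ.filter (fun p => (p.2 : ℕ) < m) with hV'def
    have hV'card : V'.card = r * m := by
      have e : V' = (univ : Finset (Fin r)) ×ˢ ((univ : Finset (Fin n)).filter fun j : Fin n => (j : ℕ) < m) := by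
        ext p; simp [hV'def, Finset.mem_product]
      rw [e, Finset.card_product, Finset.card_univ, Fintype.card_fin, hIio]
    have hVc : (univ \ V').card = r * n - r * m := by
      rw [Finset.card_sdiff_of_subset (Finset.subset_univ _), Finset.card_univ, hV'card]
      simp [Fintype.card_prod]
    -- edges in M have a prime vertex and are r-sets
    have hMprop : ∀ e ∈ M, (∀ i, (e.filter fun p => p.1 = i).card = 1) ∧ ∃ p ∈ e, (p.2 : ℕ) < m := by
      intro e he
      have := hME he
      simpa using this
    have hecard : ∀ e ∈ M, e.card = r := by
      intro e he
      have h1 := (hMprop e he).1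
      rw [Finset.card_eq_sum_card_fiberwise (fun p _ => Finset.mem_univ p.1)]
      simp [h1]
    have heV1 : ∀ e ∈ M, 1 ≤ (e ∩ V').card := by
      intro e he
      obtain ⟨p, hp, hpm⟩ := (hMprop e he).2
      exact Finset.card_pos.mpr ⟨p, Finset.mem_inter.mpr ⟨hp, by simp [hV'def, hpm]⟩⟩
    -- (1) |M| ≤ Σ |e ∩ V'|
    have hM1 : M.card ≤ ∑ e ∈ M, (e ∩ V').card := by
      calc M.card = ∑ _e ∈ M, 1 := by simp
      _ ≤ _ := Finset.sum_le_sum heV1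
    -- (2) Σ |e ∩ V'| ≤ t * (r*m)
    have hM2 : ∑ e ∈ M, (e ∩ V').card ≤ t * (r * m) := by
      rw [← hinc V' M]
      calc ∑ v ∈ V', (M.filter fun e => v ∈ e).card ≤ ∑ _v ∈ V', t :=
        Finset.sum_le_sum fun v _ => (hM v).2
      _ = V'.card * t := by rw [Finset.sum_const, smul_eq_mul]
      _ = t * (r * m) := by rw [hV'card]; ring
    -- (3) r*n - r*m ≤ Σ |e ∩ (univ \ V')|
    have hM3 : r * n - r * m ≤ ∑ e ∈ M, (e ∩ (univ \ V')).card := by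
      rw [← hinc (univ \ V') M, ← hVc]
      calc (univ \ V').card = ∑ _v ∈ univ \ V', 1 := by simp
      _ ≤ _ := Finset.sum_le_sum fun v _ => (hM v).1
    -- (4) Σ |e ∩ (univ \ V')| ≤ (r-1) * |M|
    have hM4 : ∑ e ∈ M, (e ∩ (univ \ V')).card ≤ M.card * (r - 1) := by
      have hb : ∀ e ∈ M, (e ∩ (univ \ V')).card ≤ r - 1 := by
        intro e he
        have h1 : e ∩ (univ \ V') = e \ V' := by ext p; simp
        have h2 := Finset.card_inter_add_card_sdiff e V'
        have h3 := hecard e he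
        have h4 := heV1 e he
        rw [h1]
        omega
      simpa using Finset.sum_le_card_nsmul M _ (r-1) hb
    -- combine
    obtain ⟨r', rfl⟩ : ∃ r', r = r' + 1 := ⟨r - 1, by omega⟩
    have hrm : (r'+1) * m ≤ (r'+1) * n := Nat.mul_le_mul_left _ hmn.le
    have hfin : (r'+1) * n ≤ (r'+1) * (k * m) := by
      have h5 : (r'+1) * n - (r'+1) * m ≤ (t * ((r'+1) * m)) * r' := by
        calc (r'+1) * n - (r'+1) * m ≤ ∑ e ∈ M, (e ∩ (univ \ V')).card := hM3
        _ ≤ M.card * ((r'+1) - 1) := hM4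
        _ = M.card * r' := by norm_num
        _ ≤ (∑ e ∈ M, (e ∩ V').card) * r' := Nat.mul_le_mul_right _ hM1
        _ ≤ (t * ((r'+1) * m)) * r' := Nat.mul_le_mul_right _ hM2
      have hkeq : k = r' * t + 1 := by rw [hkdef]; norm_num
      calc (r'+1) * n = ((r'+1) * n - (r'+1) * m) + (r'+1) * m := by omega
      _ ≤ (t * ((r'+1) * m)) * r' + (r'+1) * m := by omega
      _ = (r'+1) * ((r' * t + 1) * m) := by ring
      _ = (r'+1) * (k * m) := by rw [hkeq]
    have : n ≤ k * m := Nat.le_of_mul_le_mul_left hfin (by omega)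
    omega
end

section
/- In the hypergraph of the previous construction (parts $V_1,\dots,V_r$ of size $n$, distinguished subsets $V_i' \subseteq V_i$, edges being all legal $r$-sets meeting $\bigcup_i V_i'$), any $t$-shallow hitting edge set $M$ satisfies both $|M| \le t \sum_{i=1}^r |V_i'|$ and $(r-1)|M| \ge \sum_{i=1}^r (|V_i| - |V_i'|)$. Hence if $t(r-1)\sum_i |V_i'| < \sum_i(|V_i| - |V_i'|)$ then no $t$-shallow hitting edge set exists. -/
open Finset

private lemma incidence_swap {α : Type*} [DecidableEq α]
    (S : Finset α) (M : Finset (Finset α)) :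
    ∑ v ∈ S, (M.filter fun e => v ∈ e).card = ∑ e ∈ M, (S.filter fun v => v ∈ e).card := by
  simp only [Finset.card_filter]
  exact Finset.sum_comm

/-- In the `r`-partite hypergraph with parts `{i} × Fin n` and distinguished subsets
`V' i`, whose edges are all legal `r`-sets (one vertex per part) meeting `⋃ᵢ V' i`:
any `t`-shallow edge set `M` has `|M| ≤ t·∑ᵢ|V' i|`, any hitting edge set has
`∑ᵢ(n - |V' i|) ≤ (r-1)|M|`; hence if `t(r-1)∑ᵢ|V' i| < ∑ᵢ(n - |V' i|)` there is no
`t`-shallow hitting edge set. -/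
theorem partite_construction_counting (r t n : ℕ) (hr : 2 ≤ r) (ht : 1 ≤ t)
    (V' : Fin r → Finset (Fin n)) :
    let E : Finset (Finset (Fin r × Fin n)) :=
      Finset.univ.filter (fun e : Finset (Fin r × Fin n) =>
        (∀ i : Fin r, (e.filter fun p => p.1 = i).card = 1) ∧ ∃ p ∈ e, p.2 ∈ V' p.1)
    (∀ M ⊆ E, (∀ v : Fin r × Fin n, (M.filter fun e => v ∈ e).card ≤ t) →
        M.card ≤ t * ∑ i, (V' i).card) ∧
    (∀ M ⊆ E, (∀ v : Fin r × Fin n, 1 ≤ (M.filter fun e => v ∈ e).card) →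
        ∑ i, (n - (V' i).card) ≤ (r - 1) * M.card) ∧
    (t * ((r - 1) * ∑ i, (V' i).card) < ∑ i, (n - (V' i).card) →
      ¬ ∃ M ⊆ E, ∀ v : Fin r × Fin n,
          1 ≤ (M.filter fun e => v ∈ e).card ∧ (M.filter fun e => v ∈ e).card ≤ t) := by
  intro E
  classical
  set S : Finset (Fin r × Fin n) := univ.filter (fun p => p.2 ∈ V' p.1) with hS
  set Sc : Finset (Fin r × Fin n) := univ.filter (fun p => p.2 ∉ V' p.1) with hSc
  have hScard : S.card = ∑ i, (V' i).card := by
    rw [hS]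
    simp only [Finset.card_filter]
    rw [Fintype.sum_prod_type]
    congr 1
    ext i
    simp [Finset.card_filter]
  have hSccard : Sc.card = ∑ i, (n - (V' i).card) := by
    rw [hSc]
    simp only [Finset.card_filter]
    rw [Fintype.sum_prod_type]
    congr 1
    ext i
    have : ∑ x : Fin n, (if x ∉ V' i then 1 else 0) = (univ.filter (· ∉ V' i)).card := by
      simp [Finset.card_filter]
    rw [this, Finset.filter_not, Finset.filter_mem_eq_inter, Finset.univ_inter,
      Finset.card_sdiff_of_subset (Finset.subset_univ _), Finset.card_univ, Fintype.card_fin]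
  have claim1 : ∀ M ⊆ E, (∀ v : Fin r × Fin n, (M.filter fun e => v ∈ e).card ≤ t) →
      M.card ≤ t * ∑ i, (V' i).card := by
    intro M hME hsh
    have h1 : M.card ≤ ∑ e ∈ M, (S.filter fun v => v ∈ e).card := by
      have : M.card = ∑ _e ∈ M, 1 := by simp
      rw [this]
      refine Finset.sum_le_sum fun e he => ?_
      have heE := hME he
      obtain ⟨-, ⟨p, hp, hpV⟩⟩ := (Finset.mem_filter.mp heE).2
      have : p ∈ S.filter fun v => v ∈ e := by
        simp [hS, hp, hpV]
      exact Finset.card_pos.mpr ⟨p, this⟩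
    rw [← incidence_swap] at h1
    calc M.card ≤ ∑ v ∈ S, (M.filter fun e => v ∈ e).card := h1
      _ ≤ ∑ _v ∈ S, t := Finset.sum_le_sum fun v _ => hsh v
      _ = S.card * t := by rw [Finset.sum_const, smul_eq_mul]
      _ = t * ∑ i, (V' i).card := by rw [hScard, mul_comm]
  have claim2 : ∀ M ⊆ E, (∀ v : Fin r × Fin n, 1 ≤ (M.filter fun e => v ∈ e).card) →
      ∑ i, (n - (V' i).card) ≤ (r - 1) * M.card := by
    intro M hME hhit
    have h1 : Sc.card ≤ ∑ v ∈ Sc, (M.filter fun e => v ∈ e).card := by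
      have : Sc.card = ∑ _v ∈ Sc, 1 := by simp
      rw [this]
      exact Finset.sum_le_sum fun v _ => hhit v
    rw [incidence_swap] at h1
    have h2 : ∀ e ∈ M, (Sc.filter fun v => v ∈ e).card ≤ r - 1 := by
      intro e he
      have heE := hME he
      obtain ⟨hpart, ⟨p, hp, hpV⟩⟩ := (Finset.mem_filter.mp heE).2
      have hcard : e.card = r := by
        rw [Finset.card_eq_sum_card_fiberwise (f := Prod.fst) (t := univ)
          (fun q _ => Finset.mem_univ q.1)]
        simp [hpart]
      have hfeq : (Sc.filter fun v => v ∈ e) = e.filter (fun q => q.2 ∉ V' q.1) := by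
        ext q
        simp [hSc, and_comm]
      have hss : e.filter (fun q => q.2 ∉ V' q.1) ⊂ e :=
        Finset.filter_ssubset.mpr ⟨p, hp, by simpa using hpV⟩
      have := Finset.card_lt_card hss
      rw [hfeq]
      omega
    calc ∑ i, (n - (V' i).card) = Sc.card := hSccard.symm
      _ ≤ ∑ e ∈ M, (Sc.filter fun v => v ∈ e).card := h1
      _ ≤ ∑ _e ∈ M, (r - 1) := Finset.sum_le_sum h2
      _ = M.card * (r - 1) := by rw [Finset.sum_const, smul_eq_mul]
      _ = (r - 1) * M.card := mul_comm _ _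
  refine ⟨claim1, claim2, ?_⟩
  rintro hlt ⟨M, hME, hM⟩
  have a := claim1 M hME (fun v => (hM v).2)
  have b := claim2 M hME (fun v => (hM v).1)
  have c : (r - 1) * M.card ≤ (r - 1) * (t * ∑ i, (V' i).card) :=
    Nat.mul_le_mul_left _ a
  have d : (r - 1) * (t * ∑ i, (V' i).card) = t * ((r - 1) * ∑ i, (V' i).card) := by ring
  rw [d] at c
  exact absurd (le_trans b c) (not_le.mpr hlt)
end

section
/- Fix integers $k \ge t \ge 1$. For every positive integer $\mu$, the integer $n = 1 + \mu \cdot k(k-1)(k-2)\cdots(k-t+1)$ satisfies $\binom{k-i}{t-i} \mid \binom{nk-i}{t-i}$ for every integer $i$ with $0 \le i \le t-1$. -/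
/-- For `k ≥ t ≥ 1` and any positive `μ`, the integer `n = 1 + μ·k(k-1)⋯(k-t+1)`
satisfies `C(k-i, t-i) ∣ C(nk-i, t-i)` for all `0 ≤ i ≤ t-1`. -/
theorem design_divisibility_conditions (k t : ℕ) (ht : 1 ≤ t) (htk : t ≤ k)
    (μ : ℕ) (hμ : 1 ≤ μ) (n : ℕ)
    (hn : n = 1 + μ * ∏ j ∈ Finset.range t, (k - j)) :
    ∀ i < t, (k - i).choose (t - i) ∣ (n * k - i).choose (t - i) := by
  intro i hi
  have key : ∀ m, m < t → (k - m) ∣ (n * k - m) := by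
    intro m hm
    have hmk : m < k := lt_of_lt_of_le hm htk
    have h1 : (k - m) ∣ (n - 1) := by
      subst hn
      simp only [Nat.add_sub_cancel_left]
      exact Dvd.dvd.mul_left (Finset.dvd_prod_of_mem _ (Finset.mem_range.mpr hm)) μ
    have hn1 : 1 ≤ n := by subst hn; omega
    have hsplit : n * k = (n - 1) * k + k := by
      have : (n - 1) * k = n * k - k := by rw [Nat.sub_mul, one_mul]
      have hk : k ≤ n * k := Nat.le_mul_of_pos_left k hn1
      omega
    have heq : n * k - m = (n - 1) * k + (k - m) := by omega
    rw [heq]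
    exact Nat.dvd_add (h1.mul_right k) dvd_rfl
  have hd : (k - i).descFactorial (t - i) ∣ (n * k - i).descFactorial (t - i) := by
    rw [Nat.descFactorial_eq_prod_range, Nat.descFactorial_eq_prod_range]
    refine Finset.prod_dvd_prod_of_dvd _ _ ?_
    intro j hj
    simp only [Finset.mem_range] at hj
    rw [Nat.sub_sub, Nat.sub_sub]
    exact key (i + j) (by omega)
  rw [Nat.descFactorial_eq_factorial_mul_choose, Nat.descFactorial_eq_factorial_mul_choose] at hd
  exact (Nat.mul_dvd_mul_iff_left (Nat.factorial_pos (t - i))).mp hd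
end

section
/- Let $r \ge 2$, $t$, and $k$ be positive integers and let $H = (V, E)$ be a finite $r$-uniform hypergraph with maximum degree $\Delta$. If $\frac{t!}{t+1}\left(\frac{k}{\Delta}\right)^t \ge \mathrm{e}\, r$, then the edge set $E$ can be partitioned into $k$ pairwise disjoint $t$-shallow edge sets $M_1, \dots, M_k$ (i.e., there is a coloring $\chi : E \to \{1,\dots,k\}$ such that no vertex is contained in more than $t$ edges of any single color). -/
/-!
Colour the edges uniformly at random with `k` colours. A colouring is `t`-shallow exactly when
no star (a set of `t + 1` edges through a common vertex) is monochromatic, an event of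
probability `k ^ (-t)`. A star meets at most `D = (t + 1) r C(Δ - 1, t) ≤ (t + 1) r Δ ^ t / t!`
stars, itself included, and is independent of all the others, so the hypothesis gives
`e D k ^ (-t) ≤ 1`, the condition of the symmetric local lemma. The local lemma is proved in
counting form, by the usual induction showing that once the events of a set `S` are avoided,
any further event holds for at most a `1 / D` fraction of the remaining outcomes.
-/

open Finset

section LocalLemma

variable {Ω α : Type*} [Fintype Ω] [DecidableEq Ω]

def avoiding (A : α → Finset Ω) (S : Finset α) : Finset Ω :=
  univ.filter fun ω => ∀ a ∈ S, ω ∉ A a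

lemma avoiding_empty (A : α → Finset Ω) : avoiding A ∅ = univ := by
  simp [avoiding]

lemma avoiding_anti (A : α → Finset Ω) {S T : Finset α} (h : S ⊆ T) :
    avoiding A T ⊆ avoiding A S := by
  intro ω hω
  simp only [avoiding, mem_filter, mem_univ, true_and] at hω ⊢
  exact fun a ha => hω a (h ha)

lemma avoiding_insert [DecidableEq α] (A : α → Finset Ω) (a : α) (S : Finset α) :
    avoiding A (insert a S) = avoiding A S \ A a := by
  ext ω
  simp [avoiding, and_comm]

lemma pow_mul_le_pow_mul_of_insert [DecidableEq α] {N : Finset α → ℕ} {x y : ℕ} {S : Finset α}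
    (h : ∀ T ⊂ S, ∀ b ∈ S, x * N T ≤ y * N (insert b T)) {U : Finset α} (hU : U ⊆ S) :
    x ^ #U * N (S \ U) ≤ y ^ #U * N S := by
  induction U using Finset.induction_on with
  | empty => simp
  | insert b U hb ih =>
    have hbU : b ∈ S \ U := mem_sdiff.2 ⟨hU (mem_insert_self b U), hb⟩
    have hstep : x * N (S \ insert b U) ≤ y * N (S \ U) := by
      rw [sdiff_insert]
      simpa only [insert_erase hbU] using
        h _ ((erase_ssubset hbU).trans_subset sdiff_subset) b (mem_sdiff.1 hbU).1
    rw [card_insert_of_notMem hb, pow_succ, pow_succ]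
    calc x ^ #U * x * N (S \ insert b U) ≤ x ^ #U * (y * N (S \ U)) := by
          rw [mul_assoc]; exact Nat.mul_le_mul_left _ hstep
      _ = y * (x ^ #U * N (S \ U)) := by ring
      _ ≤ y * (y ^ #U * N S) := Nat.mul_le_mul_left _ (ih ((subset_insert b U).trans hU))
      _ = y ^ #U * y * N S := by ring

lemma succ_pow_succ_le_pow_mul {d s q : ℕ} (hd : 0 < d) (hs : s ≤ d)
    (hq : Real.exp 1 * (d + 1) ≤ q) : (d + 1) ^ (s + 1) ≤ d ^ s * q := by
  have hd' : (0 : ℝ) < d := by exact_mod_cast hd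
  have hratio : ((d + 1 : ℝ) / d) ^ s ≤ Real.exp 1 :=
    calc ((d + 1 : ℝ) / d) ^ s ≤ ((d + 1 : ℝ) / d) ^ d :=
          pow_le_pow_right₀ (by rw [le_div_iff₀ hd']; linarith) hs
      _ = (1 + (d : ℝ)⁻¹) ^ d := by rw [add_div, div_self hd'.ne', one_div, add_comm]
      _ ≤ Real.exp 1 := Real.one_add_inv_pow_le_exp
  rw [div_pow, div_le_iff₀ (by positivity)] at hratio
  have : ((d + 1) ^ (s + 1) : ℝ) ≤ d ^ s * q :=
    calc ((d + 1) ^ (s + 1) : ℝ) = (d + 1) ^ s * (d + 1) := pow_succ _ _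
      _ ≤ Real.exp 1 * d ^ s * (d + 1) := by gcongr
      _ = d ^ s * (Real.exp 1 * (d + 1)) := by ring
      _ ≤ d ^ s * q := by gcongr
  exact_mod_cast this

variable [DecidableEq α] {A : α → Finset Ω} {G : α → α → Prop} [DecidableRel G]
  {𝒜 : Finset α} {d q : ℕ}

lemma mul_card_avoiding_le_mul_card_avoiding_insert (hd : 0 < d)
    (hq : Real.exp 1 * (d + 1) ≤ q)
    (hdeg : ∀ a ∈ 𝒜, #((𝒜.erase a).filter (G a)) ≤ d)
    (hind : ∀ a ∈ 𝒜, ∀ S ⊆ 𝒜, (∀ b ∈ S, ¬ G a b) →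
      q * #(avoiding A S ∩ A a) ≤ #(avoiding A S)) :
    ∀ S ⊆ 𝒜, ∀ a ∈ 𝒜, d * #(avoiding A S) ≤ (d + 1) * #(avoiding A (insert a S)) := by
  intro S
  induction S using Finset.strongInduction with
  | H S ih =>
  intro hS a ha
  by_cases haS : a ∈ S
  · rw [insert_eq_of_mem haS]
    exact Nat.mul_le_mul_right _ d.le_succ
  set S₂ := S.filter fun b => ¬ G a b
  have hS₂ : S₂ ⊆ S := filter_subset _ _
  have hs : #(S \ S₂) ≤ d := by
    refine (card_le_card fun b hb => ?_).trans (hdeg a ha)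
    obtain ⟨hbS, hbS₂⟩ := mem_sdiff.1 hb
    have hG : G a b := by_contra fun h => hbS₂ (mem_filter.2 ⟨hbS, h⟩)
    exact mem_filter.2 ⟨mem_erase.2 ⟨fun h => haS (h ▸ hbS), hS hbS⟩, hG⟩
  have hindep : q * #(avoiding A S ∩ A a) ≤ #(avoiding A S₂) :=
    (Nat.mul_le_mul_left q (card_le_card (inter_subset_inter_right (avoiding_anti A hS₂)))).trans
      (hind a ha S₂ (hS₂.trans hS) fun b hb => (mem_filter.1 hb).2)
  have hchain : d ^ #(S \ S₂) * #(avoiding A S₂) ≤ (d + 1) ^ #(S \ S₂) * #(avoiding A S) := by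
    have := pow_mul_le_pow_mul_of_insert (N := fun T => #(avoiding A T))
      (fun T hT b hb => ih T hT (hT.subset.trans hS) b (hS hb)) (sdiff_subset (s := S) (t := S₂))
    rwa [Finset.sdiff_sdiff_eq_self hS₂] at this
  have hbad : (d + 1) * #(avoiding A S ∩ A a) ≤ #(avoiding A S) := by
    refine Nat.le_of_mul_le_mul_left ?_ (pow_pos d.succ_pos #(S \ S₂))
    calc (d + 1) ^ #(S \ S₂) * ((d + 1) * #(avoiding A S ∩ A a))
        = (d + 1) ^ (#(S \ S₂) + 1) * #(avoiding A S ∩ A a) := by ring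
      _ ≤ d ^ #(S \ S₂) * q * #(avoiding A S ∩ A a) :=
          Nat.mul_le_mul_right _ (succ_pow_succ_le_pow_mul hd hs hq)
      _ = d ^ #(S \ S₂) * (q * #(avoiding A S ∩ A a)) := by ring
      _ ≤ d ^ #(S \ S₂) * #(avoiding A S₂) := Nat.mul_le_mul_left _ hindep
      _ ≤ _ := hchain
  have hsplit := card_sdiff_add_card_inter (avoiding A S) (A a)
  rw [avoiding_insert]
  nlinarith

/-- Counting form of the symmetric local lemma: `hind` says that `A a` has conditional
probability at most `1 / q` given that any family of events not adjacent to `a` is avoided. -/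
theorem lovasz_local_lemma [Nonempty Ω] (hd : 0 < d)
    (hq : Real.exp 1 * (d + 1) ≤ q)
    (hdeg : ∀ a ∈ 𝒜, #((𝒜.erase a).filter (G a)) ≤ d)
    (hind : ∀ a ∈ 𝒜, ∀ S ⊆ 𝒜, (∀ b ∈ S, ¬ G a b) →
      q * #(avoiding A S ∩ A a) ≤ #(avoiding A S)) :
    ∃ ω, ∀ a ∈ 𝒜, ω ∉ A a := by
  have hchain := pow_mul_le_pow_mul_of_insert (N := fun T => #(avoiding A T)) (S := 𝒜)
    (fun T hT b hb =>
      mul_card_avoiding_le_mul_card_avoiding_insert hd hq hdeg hind T hT.subset b hb)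
    subset_rfl
  simp only [sdiff_self, bot_eq_empty, avoiding_empty, card_univ] at hchain
  have hpos : 0 < #(avoiding A 𝒜) := by
    by_contra h0
    have : 0 < d ^ #𝒜 * Fintype.card Ω := by positivity
    simp_all
  obtain ⟨ω, hω⟩ := card_pos.1 hpos
  exact ⟨ω, (mem_filter.1 hω).2⟩

end LocalLemma

section Monochromatic

variable {ι β : Type*} [Fintype ι] [DecidableEq ι] [Fintype β] [DecidableEq β]

variable (β) in
def monochromatic (T : Finset ι) : Finset (ι → β) :=
  univ.filter fun f => ∀ i ∈ T, ∀ j ∈ T, f i = f j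

-- Recolouring `E` arbitrarily is injective on colourings that are monochromatic on
-- `insert i₀ E`, since their colour on `E` is recovered from the colour of `i₀`.
lemma card_inter_monochromatic_mul_le (X : Finset (ι → β)) {i₀ : ι} {E : Finset ι}
    (hi₀ : i₀ ∉ E) (hX : ∀ f g : ι → β, (∀ j ∉ E, f j = g j) → f ∈ X → g ∈ X) :
    #(X ∩ monochromatic β (insert i₀ E)) * Fintype.card β ^ #E ≤ #X := by
  let Φ : (ι → β) × (E → β) → ι → β := fun p j => if h : j ∈ E then p.2 ⟨j, h⟩ else p.1 j
  have hΦ : ∀ p, ∀ j ∉ E, Φ p j = p.1 j := fun p j hj => dif_neg hj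
  set P := (X ∩ monochromatic β (insert i₀ E)) ×ˢ (univ : Finset (E → β))
  have hmaps : ∀ p ∈ P, Φ p ∈ X := by
    intro p hp
    exact hX p.1 _ (fun j hj => (hΦ p j hj).symm) (mem_inter.1 (mem_product.1 hp).1).1
  have hinj : Set.InjOn Φ P := by
    rintro ⟨f, g⟩ hp ⟨f', g'⟩ hp' heq
    have hf := (mem_filter.1 (mem_inter.1 (mem_product.1 hp).1).2).2
    have hf' := (mem_filter.1 (mem_inter.1 (mem_product.1 hp').1).2).2
    have hi₀' : f i₀ = f' i₀ := by simpa [hΦ _ _ hi₀] using congrFun heq i₀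
    refine Prod.ext (funext fun j => ?_) (funext fun j => ?_)
    · by_cases hj : j ∈ E
      · exact (hf j (mem_insert_of_mem hj) i₀ (mem_insert_self _ _)).trans
          (hi₀'.trans (hf' i₀ (mem_insert_self _ _) j (mem_insert_of_mem hj)))
      · simpa [hΦ _ _ hj] using congrFun heq j
    · simpa [Φ, j.2] using congrFun heq j
  calc #(X ∩ monochromatic β (insert i₀ E)) * Fintype.card β ^ #E
      = #P := by
        rw [card_product, card_univ, Fintype.card_fun, Fintype.card_coe]
    _ ≤ #X := card_le_card_of_injOn Φ hmaps hinj

lemma pow_mul_card_avoiding_inter_monochromatic_le {t : ℕ} {S : Finset (Finset ι)}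
    {T : Finset ι} (hT : #T = t + 1) (hS : ∀ T' ∈ S, Disjoint T T') :
    Fintype.card β ^ t * #(avoiding (monochromatic β) S ∩ monochromatic β T) ≤
      #(avoiding (monochromatic β) S) := by
  obtain ⟨i₀, hi₀⟩ := card_pos.1 (by omega : 0 < #T)
  have hE : #(T.erase i₀) = t := by rw [card_erase_of_mem hi₀, hT, Nat.add_sub_cancel]
  rw [← insert_erase hi₀, ← hE, mul_comm]
  refine card_inter_monochromatic_mul_le _ (notMem_erase i₀ T) fun f g hfg hf => ?_
  simp only [avoiding, mem_filter, mem_univ, true_and] at hf ⊢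
  intro T' hT' hg
  have hfg' : ∀ j ∈ T', f j = g j := fun j hj =>
    hfg j fun hjE => disjoint_left.1 (hS T' hT') (mem_of_mem_erase hjE) hj
  refine hf T' hT' (mem_filter.2 ⟨mem_univ f, fun i hi j hj => ?_⟩)
  rw [hfg' i hi, hfg' j hj]
  exact (mem_filter.1 hg).2 i hi j hj

end Monochromatic

section Stars

variable {V ι : Type*} [Fintype ι]

open Classical in
noncomputable def stars (ed : ι → Finset V) (t : ℕ) : Finset (Finset ι) :=
  univ.filter fun T => #T = t + 1 ∧ ∃ v, ∀ i ∈ T, v ∈ ed i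

variable {ed : ι → Finset V} {r t Δ : ℕ}

lemma mem_stars {T : Finset ι} : T ∈ stars ed t ↔ #T = t + 1 ∧ ∃ v, ∀ i ∈ T, v ∈ ed i := by
  classical
  simp [stars]

variable [DecidableEq V] [DecidableEq ι]

lemma card_stars_filter_mem_le (hunif : ∀ i, #(ed i) = r)
    (hΔ : ∀ v : V, #(univ.filter fun i => v ∈ ed i) ≤ Δ) (i : ι) :
    #((stars ed t).filter (i ∈ ·)) ≤ r * (Δ - 1).choose t := by
  let incident (v : V) : Finset ι := univ.filter fun j => v ∈ ed j
  have hsub : (stars ed t).filter (i ∈ ·) ⊆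
      (ed i).biUnion fun v => (((incident v).erase i).powersetCard t).image (insert i) := by
    intro T hT
    obtain ⟨hT, hiT⟩ := mem_filter.1 hT
    obtain ⟨hcard, v, hv⟩ := mem_stars.1 hT
    refine mem_biUnion.2 ⟨v, hv i hiT, mem_image.2 ⟨T.erase i, ?_, insert_erase hiT⟩⟩
    refine mem_powersetCard.2 ⟨erase_subset_erase _ fun j hj => ?_, ?_⟩
    · exact mem_filter.2 ⟨mem_univ j, hv j hj⟩
    · rw [card_erase_of_mem hiT, hcard, Nat.add_sub_cancel]
  have hcount : ∀ v ∈ ed i, #((((incident v).erase i).powersetCard t).image (insert i)) ≤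
      (Δ - 1).choose t := by
    intro v hv
    refine card_image_le.trans ?_
    rw [card_powersetCard, card_erase_of_mem (mem_filter.2 ⟨mem_univ i, hv⟩)]
    exact Nat.choose_le_choose t (Nat.sub_le_sub_right (hΔ v) 1)
  calc #((stars ed t).filter (i ∈ ·)) ≤ _ := card_le_card hsub
    _ ≤ _ := card_biUnion_le
    _ ≤ #(ed i) * (Δ - 1).choose t := sum_le_card_nsmul _ _ _ hcount
    _ = r * (Δ - 1).choose t := by rw [hunif]

lemma card_stars_erase_filter_not_disjoint_le (hunif : ∀ i, #(ed i) = r)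
    (hΔ : ∀ v : V, #(univ.filter fun i => v ∈ ed i) ≤ Δ) {T₀ : Finset ι} (hT₀ : T₀ ∈ stars ed t) :
    #(((stars ed t).erase T₀).filter fun T => ¬ Disjoint T₀ T) ≤
      (t + 1) * (r * (Δ - 1).choose t) - 1 := by
  have hT₀card := (mem_stars.1 hT₀).1
  have hself : T₀ ∈ (stars ed t).filter fun T => ¬ Disjoint T₀ T :=
    mem_filter.2 ⟨hT₀, fun h => by simp [(disjoint_self_iff_empty _).1 h] at hT₀card⟩
  have hsub : (stars ed t).filter (fun T => ¬ Disjoint T₀ T) ⊆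
      T₀.biUnion fun i => (stars ed t).filter (i ∈ ·) := by
    intro T hT
    obtain ⟨hT, hndisj⟩ := mem_filter.1 hT
    obtain ⟨i, hi₀, hi⟩ := not_disjoint_iff.1 hndisj
    exact mem_biUnion.2 ⟨i, hi₀, mem_filter.2 ⟨hT, hi⟩⟩
  rw [filter_erase, card_erase_of_mem hself]
  refine Nat.sub_le_sub_right ?_ 1
  calc _ ≤ _ := card_le_card hsub
    _ ≤ _ := card_biUnion_le
    _ ≤ #T₀ * (r * (Δ - 1).choose t) :=
        sum_le_card_nsmul _ _ _ fun i _ => card_stars_filter_mem_le hunif hΔ i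
    _ = (t + 1) * (r * (Δ - 1).choose t) := by rw [hT₀card]

lemma card_filter_le_of_forall_stars_notMem_monochromatic {β : Type*} [Fintype β] [DecidableEq β]
    {χ : ι → β} (hχ : ∀ T ∈ stars ed t, χ ∉ monochromatic β T) (v : V) (c : β) :
    #(univ.filter fun i => v ∈ ed i ∧ χ i = c) ≤ t := by
  by_contra! h
  obtain ⟨T, hTsub, hTcard⟩ := exists_subset_card_eq (Nat.succ_le_of_lt h)
  have hT (i : ι) (hi : i ∈ T) : v ∈ ed i ∧ χ i = c := (mem_filter.1 (hTsub hi)).2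
  refine hχ T (mem_stars.2 ⟨hTcard, v, fun i hi => (hT i hi).1⟩) (mem_filter.2 ⟨mem_univ χ, ?_⟩)
  intro i hi j hj
  rw [(hT i hi).2, (hT j hj).2]

end Stars

lemma exp_one_mul_le_pow {r t k Δ : ℕ} (hΔ : 0 < Δ)
    (hcond : Real.exp 1 * r ≤ (Nat.factorial t : ℝ) / (t + 1) * ((k : ℝ) / Δ) ^ t) :
    Real.exp 1 * ((t + 1) * (r * (Δ - 1).choose t) : ℕ) ≤ (k : ℝ) ^ t := by
  have hΔ' : (0 : ℝ) < Δ := by exact_mod_cast hΔ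
  have hchoose : ((Δ - 1).choose t : ℝ) ≤ (Δ : ℝ) ^ t / t.factorial :=
    (Nat.choose_le_pow_div t (Δ - 1)).trans (by gcongr; exact_mod_cast Nat.sub_le Δ 1)
  rw [div_pow, mul_div, le_div_iff₀ (by positivity), div_mul_eq_mul_div,
    le_div_iff₀ (by positivity)] at hcond
  calc Real.exp 1 * ((t + 1) * (r * (Δ - 1).choose t) : ℕ)
      ≤ Real.exp 1 * ((t + 1) * (r * ((Δ : ℝ) ^ t / t.factorial))) := by push_cast; gcongr
    _ = Real.exp 1 * r * ((t + 1) * Δ ^ t) / t.factorial := by ring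
    _ ≤ k ^ t := by rw [div_le_iff₀ (by positivity)]; linarith

theorem edge_partition_into_shallow_sets_general
    {V ι : Type*} [Fintype ι] [DecidableEq V] [DecidableEq ι]
    (r t k Δ : ℕ) (hr : 2 ≤ r) (hk : 1 ≤ k)
    (ed : ι → Finset V) (hunif : ∀ i, (ed i).card = r)
    (hΔ : ∀ v : V, (Finset.univ.filter fun i => v ∈ ed i).card ≤ Δ)
    (hcond : Real.exp 1 * r ≤ (Nat.factorial t : ℝ) / (t + 1) * ((k : ℝ) / Δ)^t) :
    ∃ χ : ι → Fin k, ∀ (v : V) (c : Fin k),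
      (Finset.univ.filter fun i => v ∈ ed i ∧ χ i = c).card ≤ t := by
  have : NeZero k := ⟨by omega⟩
  rcases le_or_gt Δ t with hΔt | hΔt
  · exact ⟨0, fun v c => (card_le_card (monotone_filter_right _ fun _ _ => And.left)).trans
      ((hΔ v).trans hΔt)⟩
  set D := (t + 1) * (r * (Δ - 1).choose t)
  have hD : 2 ≤ D := hr.trans ((Nat.le_mul_of_pos_right r (Nat.choose_pos (by omega))).trans
    (Nat.le_mul_of_pos_left _ t.succ_pos))
  have hq : Real.exp 1 * (((D - 1 : ℕ) : ℝ) + 1) ≤ ((k ^ t : ℕ) : ℝ) := by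
    rw [Nat.cast_sub (by omega : 1 ≤ D), Nat.cast_one, sub_add_cancel, Nat.cast_pow]
    exact exp_one_mul_le_pow (by omega) hcond
  obtain ⟨χ, hχ⟩ := lovasz_local_lemma (A := monochromatic (Fin k))
    (G := fun T T' => ¬ Disjoint T T') (by omega) hq
    (fun T hT => card_stars_erase_filter_not_disjoint_le hunif hΔ hT)
    (fun T hT S _ hS => by
      simpa using pow_mul_card_avoiding_inter_monochromatic_le (β := Fin k) (mem_stars.1 hT).1
        fun T' hT' => not_not.1 (hS T' hT'))
  exact ⟨χ, card_filter_le_of_forall_stars_notMem_monochromatic hχ⟩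

/-- Lemma 3.1: if `H` is an `r`-uniform hypergraph (edges indexed by `ι`, parallel edges
allowed) with maximum degree at most `Δ`, and `t!/(t+1)·(k/Δ)^t ≥ e·r`, then the edges can
be `k`-colored so that every color class is `t`-shallow, i.e. no vertex lies in more than
`t` edges of a single color. -/
theorem edge_partition_into_shallow_sets
    {V ι : Type*} [Fintype V] [Fintype ι] [DecidableEq V] [DecidableEq ι]
    (r t k Δ : ℕ) (hr : 2 ≤ r) (ht : 1 ≤ t) (hk : 1 ≤ k)
    (ed : ι → Finset V) (hunif : ∀ i, (ed i).card = r)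
    (hΔ : ∀ v : V, (Finset.univ.filter fun i => v ∈ ed i).card ≤ Δ)
    (hcond : Real.exp 1 * r ≤ (Nat.factorial t : ℝ) / (t + 1) * ((k : ℝ) / Δ)^t) :
    ∃ χ : ι → Fin k, ∀ (v : V) (c : Fin k),
      (Finset.univ.filter fun i => v ∈ ed i ∧ χ i = c).card ≤ t :=
  edge_partition_into_shallow_sets_general r t k Δ hr hk ed hunif hΔ hcond
end
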